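/- arXiv:1301.4847 — 3 statements merged into one kernel-verified Lean document; each statement's English description precedes it below -/
import Mathlib

section
/- There exists a constant C₉ > 0, depending only on T, ε, r and u₀ (but not on δ), such that for every δ∈(0,1) and every classical solution (u,φ) of the monostable system with diffusion δ, ‖φ(t,·)‖₂ ≤ C₉ for all t∈[0,T]. -/
open Set MeasureTheory

noncomputable def pnorm (p : ℝ) (f : ℝ → ℝ) : ℝ :=
  (∫ x in (-1:ℝ)..1, |f x| ^ p) ^ (1 / p)

noncomputable def supnorm (f : ℝ → ℝ) : ℝ :=
  sSup ((fun x => |f x|) '' Set.Icc (-1:ℝ) 1)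

/-- A classical solution of the monostable system with diffusion `δ`:
`∂ₜu = δ ∂ₓ²u − ∂ₓ(u φ) + r u (1−u)`, `−ε ∂ₓ²φ + φ = −∂ₓu`,
Neumann b.c. for `u`, Dirichlet b.c. for `φ`, initial datum `u₀`. -/
structure IsMonostableSol (T ε r δ : ℝ) (u₀ : ℝ → ℝ) (u φ : ℝ → ℝ → ℝ) : Prop where
  smooth_u : ContDiff ℝ (⊤ : ℕ∞) (fun q : ℝ × ℝ => u q.1 q.2)
  smooth_phi : ContDiff ℝ (⊤ : ℕ∞) (fun q : ℝ × ℝ => φ q.1 q.2)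
  nonneg : ∀ t ∈ Set.Icc (0:ℝ) T, ∀ x ∈ Set.Icc (-1:ℝ) 1, 0 ≤ u t x
  eq_u : ∀ t ∈ Set.Icc (0:ℝ) T, ∀ x ∈ Set.Icc (-1:ℝ) 1,
    deriv (fun s => u s x) t =
      δ * deriv (deriv (u t)) x - deriv (fun y => u t y * φ t y) x
        + r * u t x * (1 - u t x)
  eq_phi : ∀ t ∈ Set.Icc (0:ℝ) T, ∀ x ∈ Set.Icc (-1:ℝ) 1,
    -ε * deriv (deriv (φ t)) x + φ t x = -deriv (u t) x
  bc_u : ∀ t ∈ Set.Icc (0:ℝ) T, deriv (u t) (-1) = 0 ∧ deriv (u t) 1 = 0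
  bc_phi : ∀ t ∈ Set.Icc (0:ℝ) T, φ t (-1) = 0 ∧ φ t 1 = 0
  init : ∀ x ∈ Set.Icc (-1:ℝ) 1, u 0 x = u₀ x

open intervalIntegral


lemma smooth_deriv {f : ℝ → ℝ} (hf : ContDiff ℝ (⊤ : ℕ∞) f) : ContDiff ℝ (⊤:ℕ∞) (deriv f) :=
  (contDiff_infty_iff_deriv.mp (hf.of_le (by simp))).2

lemma hasDerivAt_of_smooth {f : ℝ → ℝ} (hf : ContDiff ℝ (⊤:ℕ∞) f) (x : ℝ) :
    HasDerivAt f (deriv f x) x :=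
  ((hf.differentiable (by simp)) x).hasDerivAt

lemma abs_primitive_le {w : ℝ → ℝ} (hw : Continuous w) {x : ℝ} (hx : x ∈ Icc (-1:ℝ) 1) :
    |∫ y in (-1:ℝ)..x, w y| ≤ ∫ y in (-1:ℝ)..1, |w y| := by
  have h1 : |∫ y in (-1:ℝ)..x, w y| ≤ ∫ y in (-1:ℝ)..x, |w y| := by
    simpa [Real.norm_eq_abs] using intervalIntegral.norm_integral_le_integral_norm (f := w)
      (μ := volume) hx.1
  have h2 : (∫ y in (-1:ℝ)..x, |w y|) + ∫ y in x..1, |w y| = ∫ y in (-1:ℝ)..1, |w y| :=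
    integral_add_adjacent_intervals (hw.abs.intervalIntegrable _ _) (hw.abs.intervalIntegrable _ _)
  have h3 : 0 ≤ ∫ y in x..1, |w y| := intervalIntegral.integral_nonneg hx.2 (fun _ _ => abs_nonneg _)
  linarith

lemma elliptic_bound (ε : ℝ) (hε : 0 < ε) :
    ∃ C > (0:ℝ), ∀ f v : ℝ → ℝ, ContDiff ℝ (⊤ : ℕ∞) f → ContDiff ℝ (⊤ : ℕ∞) v →
      (∀ x ∈ Icc (-1:ℝ) 1, ε * deriv (deriv f) x = f x + deriv v x) →
      f (-1) = 0 → f 1 = 0 →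
      ∀ x ∈ Icc (-1:ℝ) 1, |f x| ≤ C * ∫ y in (-1:ℝ)..1, |v y| := by
  set μ : ℝ := Real.sqrt (1/ε) with hμdef
  have hμpos : 0 < μ := Real.sqrt_pos.mpr (by positivity)
  have hμsq : μ * μ = 1/ε := Real.mul_self_sqrt (by positivity)
  set E : ℝ := Real.exp (3*μ) with hEdef
  have hEpos : 0 < E := Real.exp_pos _
  have hE1 : 1 ≤ E := by
    rw [hEdef]; nlinarith [Real.add_one_le_exp (3*μ)]
  set A : ℝ := E * ((μ/ε)*2*E*E + E/ε) with hAdef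
  have hApos : 0 < A := by positivity
  refine ⟨E*(2*E*(A + (μ/ε)*E) + E/ε), by positivity, ?_⟩
  intro f v hf hv heq hbm hbp
  have hfd : ∀ x : ℝ, HasDerivAt f (deriv f x) x := hasDerivAt_of_smooth (hf.of_le (by simp))
  have hfd' : ∀ x : ℝ, HasDerivAt (deriv f) (deriv (deriv f) x) x :=
    hasDerivAt_of_smooth (smooth_deriv hf)
  have hvd : ∀ x : ℝ, HasDerivAt v (deriv v x) x := hasDerivAt_of_smooth (hv.of_le (by simp))
  have hfc : Continuous f := hf.continuous
  have hf'c : Continuous (deriv f) := (smooth_deriv hf).continuous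
  have hvc : Continuous v := hv.continuous
  set N : ℝ := ∫ y in (-1:ℝ)..1, |v y| with hNdef
  have hN0 : 0 ≤ N :=
    intervalIntegral.integral_nonneg (by norm_num) (fun _ _ => abs_nonneg _)
  -- exponential bound
  have hexp : ∀ c y : ℝ, |c| ≤ 2*μ → y ∈ Icc (-1:ℝ) 1 → Real.exp (c*y) ≤ E := by
    intro c y hc hy
    rw [hEdef, Real.exp_le_exp]
    have h1 : c*y ≤ |c| * |y| := le_trans (le_abs_self _) (abs_mul c y).le
    have hy1 : |y| ≤ 1 := abs_le.mpr ⟨hy.1, hy.2⟩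
    nlinarith [abs_nonneg c]
  -- the function g
  set g : ℝ → ℝ := fun x => Real.exp (-μ*x) * (deriv f x + μ * f x - v x / ε) with hgdef
  have hgcont : Continuous g :=
    (Real.continuous_exp.comp (continuous_const.mul continuous_id)).mul
      ((hf'c.add (continuous_const.mul hfc)).sub (hvc.div_const ε))
  have hgd : ∀ x ∈ Icc (-1:ℝ) 1,
      HasDerivAt g ((μ/ε) * (Real.exp (-μ*x) * v x)) x := by
    intro x hx
    have he : HasDerivAt (fun y : ℝ => Real.exp (-μ*y)) (Real.exp (-μ*x) * (-μ)) x := by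
      simpa using (((hasDerivAt_id x).const_mul (-μ)).exp)
    have hi : HasDerivAt (fun y => deriv f y + μ * f y - v y / ε)
        (deriv (deriv f) x + μ * deriv f x - deriv v x / ε) x :=
      ((hfd' x).add ((hfd x).const_mul μ)).sub ((hvd x).div_const ε)
    have hmul := he.mul hi
    refine hmul.congr_deriv (Eq.symm ?_)
    have h2 := heq x hx
    linear_combination (-(Real.exp (-μ*x))/ε : ℝ) * h2
      + (Real.exp (-μ*x) * f x) * hμsq
      + (Real.exp (-μ*x) * deriv (deriv f) x : ℝ) * (mul_inv_cancel₀ (ne_of_gt hε) : ε * ε⁻¹ = 1)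
  -- integrated form of g
  set J : ℝ → ℝ := fun x => ∫ y in (-1:ℝ)..x, Real.exp (-μ*y) * v y with hJdef
  have hJint : ∀ a b : ℝ, IntervalIntegrable (fun y => Real.exp (-μ*y) * v y) volume a b :=
    fun a b => ((Real.continuous_exp.comp (continuous_const.mul continuous_id)).mul
      hvc).intervalIntegrable a b
  have hJcont : Continuous J := intervalIntegral.continuous_primitive hJint (-1)
  have hgint : ∀ x ∈ Icc (-1:ℝ) 1, g x = g (-1) + (μ/ε) * J x := by
    intro x hx
    have hsub : uIcc (-1:ℝ) x ⊆ Icc (-1:ℝ) 1 := by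
      rw [uIcc_of_le hx.1]; exact Icc_subset_Icc le_rfl hx.2
    have hFTC := integral_eq_sub_of_hasDerivAt (f := g)
      (f' := fun y => (μ/ε) * (Real.exp (-μ*y) * v y)) (a := -1) (b := x)
      (fun y hy => hgd y (hsub hy))
      ((continuous_const.mul ((Real.continuous_exp.comp
        (continuous_const.mul continuous_id)).mul hvc)).intervalIntegrable _ _)
    rw [intervalIntegral.integral_const_mul] at hFTC
    rw [hJdef]
    linarith [hFTC]
  -- L¹-type bound
  have key : ∀ c : ℝ, |c| ≤ 2*μ →
      (∫ y in (-1:ℝ)..1, |Real.exp (c*y) * v y|) ≤ E * N := by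
    intro c hc
    have h2 : (∫ y in (-1:ℝ)..1, |Real.exp (c*y) * v y|)
        ≤ ∫ y in (-1:ℝ)..1, E * |v y| := by
      apply intervalIntegral.integral_mono_on (by norm_num)
        (((Real.continuous_exp.comp (continuous_const.mul continuous_id)).mul
          hvc).abs.intervalIntegrable _ _)
        ((continuous_const.mul hvc.abs).intervalIntegrable _ _)
      intro y hy
      show |Real.exp (c*y) * v y| ≤ E * |v y|
      rw [abs_mul (Real.exp (c*y)) (v y), abs_of_pos (Real.exp_pos _)]
      exact mul_le_mul_of_nonneg_right (hexp c y hc hy) (abs_nonneg _)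
    rw [intervalIntegral.integral_const_mul] at h2
    exact h2
  have hJb : ∀ x ∈ Icc (-1:ℝ) 1, |J x| ≤ E * N := by
    intro x hx
    have h1 := abs_primitive_le (w := fun y => Real.exp (-μ*y) * v y)
      ((Real.continuous_exp.comp (continuous_const.mul continuous_id)).mul hvc) hx
    have h2 := key (-μ) (by rw [abs_of_nonpos (by linarith)]; linarith)
    calc |J x| ≤ _ := h1
      _ ≤ E * N := h2
  -- Φ and FTC for h
  set Φ : ℝ → ℝ := fun y => Real.exp (2*μ*y) * g y + Real.exp (μ*y) * v y / ε with hΦdef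
  have hΦcont : Continuous Φ :=
    ((Real.continuous_exp.comp (continuous_const.mul continuous_id)).mul hgcont).add
      (((Real.continuous_exp.comp (continuous_const.mul continuous_id)).mul hvc).div_const ε)
  have hhd : ∀ y : ℝ, HasDerivAt (fun z => Real.exp (μ*z) * f z) (Φ y) y := by
    intro y
    have he : HasDerivAt (fun z : ℝ => Real.exp (μ*z)) (Real.exp (μ*y) * μ) y := by
      simpa using (((hasDerivAt_id y).const_mul μ).exp)
    have hmul := he.mul (hfd y)
    refine hmul.congr_deriv (Eq.symm ?_)
    have hee : Real.exp (2*μ*y) * Real.exp (-μ*y) = Real.exp (μ*y) := by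
      rw [← Real.exp_add]; ring_nf
    linear_combination ((deriv f y + μ * f y - v y / ε : ℝ)) * hee
  have hhint : ∀ x : ℝ, Real.exp (μ*x) * f x = ∫ y in (-1:ℝ)..x, Φ y := by
    intro x
    have hFTC := integral_eq_sub_of_hasDerivAt (a := -1) (b := x)
      (fun y _ => hhd y) (hΦcont.intervalIntegrable _ _)
    have hb : Real.exp (μ*(-1)) * f (-1) = 0 := by rw [hbm]; ring
    rw [hFTC, hb]; ring
  have hzero : (∫ y in (-1:ℝ)..1, Φ y) = 0 := by
    have := hhint 1
    rw [hbp] at this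
    simpa using this.symm
  -- bound on g (-1)
  have ha : |g (-1)| ≤ A * N := by
    have hIlb : 2 * E⁻¹ ≤ ∫ y in (-1:ℝ)..1, Real.exp (2*μ*y) := by
      have hmono : (∫ y in (-1:ℝ)..1, (E⁻¹:ℝ))
          ≤ ∫ y in (-1:ℝ)..1, Real.exp (2*μ*y) := by
        apply intervalIntegral.integral_mono_on (by norm_num)
          (intervalIntegrable_const)
          ((Real.continuous_exp.comp (continuous_const.mul continuous_id)).intervalIntegrable _ _)
        intro y hy
        show (E⁻¹:ℝ) ≤ Real.exp (2*μ*y)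
        rw [hEdef, ← Real.exp_neg, Real.exp_le_exp]
        nlinarith [hy.1, hy.2, hμpos.le]
      rw [intervalIntegral.integral_const] at hmono
      calc 2 * E⁻¹ = (1 - (-1:ℝ)) • (E⁻¹:ℝ) := by norm_num
        _ ≤ _ := hmono
    have hsplit : (0:ℝ) = g (-1) * (∫ y in (-1:ℝ)..1, Real.exp (2*μ*y))
        + ((μ/ε) * (∫ y in (-1:ℝ)..1, Real.exp (2*μ*y) * J y)
          + (1/ε) * ∫ y in (-1:ℝ)..1, Real.exp (μ*y) * v y) := by
      rw [← hzero]
      have hcongr : ∫ y in (-1:ℝ)..1, Φ y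
          = ∫ y in (-1:ℝ)..1, (g (-1) * Real.exp (2*μ*y)
            + ((μ/ε) * (Real.exp (2*μ*y) * J y) + (1/ε) * (Real.exp (μ*y) * v y))) := by
        apply intervalIntegral.integral_congr
        intro y hy
        rw [uIcc_of_le (by norm_num)] at hy
        rw [hΦdef]
        simp only
        rw [hgint y hy]
        field_simp
        ring
      rw [hcongr]
      rw [intervalIntegral.integral_add, intervalIntegral.integral_add,
        intervalIntegral.integral_const_mul, intervalIntegral.integral_const_mul,
        intervalIntegral.integral_const_mul]
      · exact ((continuous_const.mul ((Real.continuous_exp.comp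
          (continuous_const.mul continuous_id)).mul hJcont))).intervalIntegrable _ _
      · exact ((continuous_const.mul ((Real.continuous_exp.comp
          (continuous_const.mul continuous_id)).mul hvc))).intervalIntegrable _ _
      · exact (continuous_const.mul (Real.continuous_exp.comp
          (continuous_const.mul continuous_id))).intervalIntegrable _ _
      · exact (((continuous_const.mul ((Real.continuous_exp.comp
          (continuous_const.mul continuous_id)).mul hJcont))).add
          ((continuous_const.mul ((Real.continuous_exp.comp
          (continuous_const.mul continuous_id)).mul hvc)))).intervalIntegrable _ _
    have hK : |∫ y in (-1:ℝ)..1, Real.exp (2*μ*y) * J y| ≤ E * (E * N) * 2 := by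
      have := intervalIntegral.norm_integral_le_of_norm_le_const
        (C := E * (E * N)) (f := fun y => Real.exp (2*μ*y) * J y) (a := (-1:ℝ)) (b := 1) ?_
      · rw [Real.norm_eq_abs] at this
        calc |∫ y in (-1:ℝ)..1, Real.exp (2*μ*y) * J y| ≤ E * (E*N) * |1 - (-1:ℝ)| := this
          _ = E * (E * N) * 2 := by norm_num
      · intro y hy
        have hy' : y ∈ Icc (-1:ℝ) 1 := by
          rw [uIoc_of_le (by norm_num)] at hy
          exact ⟨le_of_lt hy.1, hy.2⟩
        rw [Real.norm_eq_abs, abs_mul (Real.exp (2*μ*y)) (J y), abs_of_pos (Real.exp_pos _)]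
        have h1 := hexp (2*μ) y (by rw [abs_of_nonneg (by linarith)]) hy'
        have h2 := hJb y hy'
        nlinarith [Real.exp_pos (2*μ*y), abs_nonneg (J y)]
    have hL : |∫ y in (-1:ℝ)..1, Real.exp (μ*y) * v y| ≤ E * N := by
      have h1 := intervalIntegral.norm_integral_le_integral_norm
          (f := fun y => Real.exp (μ*y) * v y) (μ := volume) (by norm_num : (-1:ℝ) ≤ 1)
      simp only [Real.norm_eq_abs] at h1
      have h2 := key μ (by rw [abs_of_nonneg hμpos.le]; linarith)
      linarith
    have hIpos : (0:ℝ) < ∫ y in (-1:ℝ)..1, Real.exp (2*μ*y) := by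
      have : (0:ℝ) < 2 * E⁻¹ := by positivity
      linarith
    have hcomb : |g (-1)| * (2 * E⁻¹)
        ≤ (μ/ε) * (E * (E*N) * 2) + (1/ε) * (E * N) := by
      have h1 : |g (-1)| * (2 * E⁻¹) ≤ |g (-1)| * ∫ y in (-1:ℝ)..1, Real.exp (2*μ*y) :=
        mul_le_mul_of_nonneg_left hIlb (abs_nonneg _)
      have h2 : |g (-1)| * ∫ y in (-1:ℝ)..1, Real.exp (2*μ*y)
          = |g (-1) * ∫ y in (-1:ℝ)..1, Real.exp (2*μ*y)| := by
        rw [abs_mul (g (-1)) (∫ y in (-1:ℝ)..1, Real.exp (2*μ*y)), abs_of_pos hIpos]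
      have h3 : g (-1) * (∫ y in (-1:ℝ)..1, Real.exp (2*μ*y))
          = -((μ/ε) * (∫ y in (-1:ℝ)..1, Real.exp (2*μ*y) * J y)
            + (1/ε) * ∫ y in (-1:ℝ)..1, Real.exp (μ*y) * v y) := by linarith [hsplit]
      rw [h2, h3, abs_neg] at h1
      have h4 : |(μ/ε) * (∫ y in (-1:ℝ)..1, Real.exp (2*μ*y) * J y)
            + (1/ε) * ∫ y in (-1:ℝ)..1, Real.exp (μ*y) * v y|
          ≤ (μ/ε) * (E * (E*N) * 2) + (1/ε) * (E * N) := by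
        calc _ ≤ |(μ/ε) * (∫ y in (-1:ℝ)..1, Real.exp (2*μ*y) * J y)|
              + |(1/ε) * ∫ y in (-1:ℝ)..1, Real.exp (μ*y) * v y| := abs_add_le _ _
          _ ≤ _ := by
            rw [abs_mul (μ/ε) (∫ y in (-1:ℝ)..1, Real.exp (2*μ*y) * J y),
              abs_mul (1/ε) (∫ y in (-1:ℝ)..1, Real.exp (μ*y) * v y),
              abs_of_nonneg (by positivity : (0:ℝ) ≤ μ/ε),
              abs_of_nonneg (by positivity : (0:ℝ) ≤ 1/ε)]
            have i1 := mul_le_mul_of_nonneg_left hK (by positivity : (0:ℝ) ≤ μ/ε)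
            have i2 := mul_le_mul_of_nonneg_left hL (by positivity : (0:ℝ) ≤ 1/ε)
            linarith
      linarith
    have hE0 : E ≠ 0 := ne_of_gt hEpos
    calc |g (-1)| = (|g (-1)| * (2*E⁻¹)) * (E/2) := by field_simp
      _ ≤ ((μ/ε) * (E*(E*N)*2) + (1/ε)*(E*N)) * (E/2) :=
          mul_le_mul_of_nonneg_right hcomb (by positivity)
      _ ≤ A * N := by
          rw [hAdef]
          have hnn : (0:ℝ) ≤ μ/ε*E*E*E*N + E*E*N/(2*ε) := by positivity
          have hid : E*(μ/ε*2*E*E + E/ε)*N - (μ/ε*(E*(E*N)*2) + 1/ε*(E*N))*(E/2)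
              = μ/ε*E*E*E*N + E*E*N/(2*ε) := by ring
          linarith [hnn, hid]
  -- final bound
  intro x hx
  have hfx : f x = Real.exp (-μ*x) * ∫ y in (-1:ℝ)..x, Φ y := by
    rw [← hhint x, ← mul_assoc, ← Real.exp_add]
    simp
  have h1 : |f x| ≤ E * |∫ y in (-1:ℝ)..x, Φ y| := by
    rw [hfx, abs_mul (Real.exp (-μ*x)) (∫ y in (-1:ℝ)..x, Φ y), abs_of_pos (Real.exp_pos _)]
    exact mul_le_mul_of_nonneg_right
      (hexp (-μ) x (by rw [abs_of_nonpos (by linarith)]; linarith) hx) (abs_nonneg _)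
  have h2 : |∫ y in (-1:ℝ)..x, Φ y| ≤ ∫ y in (-1:ℝ)..1, |Φ y| := abs_primitive_le hΦcont hx
  have h3 : (∫ y in (-1:ℝ)..1, |Φ y|)
      ≤ ∫ y in (-1:ℝ)..1, (E*(A*N + (μ/ε)*(E*N)) + (E/ε) * |v y|) := by
    apply intervalIntegral.integral_mono_on (by norm_num)
      (hΦcont.abs.intervalIntegrable _ _)
      ((continuous_const.add (continuous_const.mul hvc.abs)).intervalIntegrable _ _)
    intro y hy
    have hgy : |g y| ≤ A*N + (μ/ε)*(E*N) := by
      rw [hgint y hy]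
      have hterm : |(μ/ε) * J y| ≤ (μ/ε)*(E*N) := by
        rw [abs_mul (μ/ε) (J y), abs_of_nonneg (by positivity : (0:ℝ) ≤ μ/ε)]
        exact mul_le_mul_of_nonneg_left (hJb y hy) (by positivity : (0:ℝ) ≤ μ/ε)
      calc |g (-1) + (μ/ε) * J y| ≤ |g (-1)| + |(μ/ε) * J y| := abs_add_le _ _
        _ ≤ A*N + (μ/ε)*(E*N) := by linarith [ha]
    have he2 := hexp (2*μ) y (by rw [abs_of_nonneg (by linarith)]) hy
    have he1 := hexp μ y (by rw [abs_of_nonneg hμpos.le]; linarith) hy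
    show |Real.exp (2*μ*y) * g y + Real.exp (μ*y) * v y / ε|
        ≤ E*(A*N + (μ/ε)*(E*N)) + (E/ε) * |v y|
    have e2 : |Real.exp (2*μ*y) * g y| ≤ E * (A*N + (μ/ε)*(E*N)) := by
      rw [abs_mul (Real.exp (2*μ*y)) (g y), abs_of_pos (Real.exp_pos (2*μ*y))]
      exact mul_le_mul he2 hgy (abs_nonneg _) hEpos.le
    have e1 : |Real.exp (μ*y) * v y / ε| ≤ (E/ε) * |v y| := by
      rw [abs_div, abs_mul (Real.exp (μ*y)) (v y), abs_of_pos (Real.exp_pos (μ*y)),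
        abs_of_pos hε]
      calc Real.exp (μ*y) * |v y| / ε ≤ E * |v y| / ε :=
            (div_le_div_iff_of_pos_right hε).mpr (mul_le_mul_of_nonneg_right he1 (abs_nonneg _))
        _ = (E/ε) * |v y| := by ring
    calc |Real.exp (2*μ*y) * g y + Real.exp (μ*y) * v y / ε|
        ≤ |Real.exp (2*μ*y) * g y| + |Real.exp (μ*y) * v y / ε| := abs_add_le _ _
      _ ≤ E*(A*N + (μ/ε)*(E*N)) + (E/ε) * |v y| := by linarith
  have h4 : (∫ y in (-1:ℝ)..1, (E*(A*N + (μ/ε)*(E*N)) + (E/ε) * |v y|))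
      = 2*(E*(A*N + (μ/ε)*(E*N))) + (E/ε) * N := by
    rw [intervalIntegral.integral_add (f := fun _ => E*(A*N + (μ/ε)*(E*N))) (g := fun y => (E/ε) * |v y|) intervalIntegrable_const
      ((continuous_const.mul hvc.abs : Continuous fun y => (E/ε) * |v y|).intervalIntegrable _ _),
      intervalIntegral.integral_const, intervalIntegral.integral_const_mul]
    rw [hNdef]
    norm_num
  have hfinal : |f x| ≤ E * (2*(E*(A*N + (μ/ε)*(E*N))) + (E/ε) * N) := by
    have h5 : |∫ y in (-1:ℝ)..x, Φ y| ≤ 2*(E*(A*N + (μ/ε)*(E*N))) + (E/ε) * N := by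
      rw [← h4]; exact le_trans h2 h3
    exact le_trans h1 (mul_le_mul_of_nonneg_left h5 hEpos.le)
  calc |f x| ≤ E * (2*(E*(A*N + (μ/ε)*(E*N))) + (E/ε) * N) := hfinal
    _ = E*(2*E*(A + (μ/ε)*E) + E/ε) * N := by ring

lemma smooth_deriv' {f : ℝ → ℝ} (hf : ContDiff ℝ (⊤:ℕ∞) f) : ContDiff ℝ (⊤:ℕ∞) (deriv f) :=
  (contDiff_infty_iff_deriv.mp hf).2

lemma hasDerivAt_of_smooth' {f : ℝ → ℝ} (hf : ContDiff ℝ (⊤:ℕ∞) f) (x : ℝ) :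
    HasDerivAt f (deriv f x) x :=
  ((hf.differentiable (by simp)) x).hasDerivAt

lemma mass_bound (T ε r δ : ℝ) (u₀ : ℝ → ℝ) (u φ : ℝ → ℝ → ℝ)
    (hT : 0 < T) (hr : 0 ≤ r) (sol : IsMonostableSol T ε r δ u₀ u φ) :
    ∀ t ∈ Set.Icc (0:ℝ) T,
      (∫ x in (-1:ℝ)..1, u t x) ≤ Real.exp (r*T) * ∫ x in (-1:ℝ)..1, u₀ x := by
  have hU := sol.smooth_u
  have hUd : Differentiable ℝ (fun q : ℝ × ℝ => u q.1 q.2) := hU.differentiable (by simp)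
  set D : ℝ → ℝ → ℝ := fun t x => fderiv ℝ (fun q : ℝ × ℝ => u q.1 q.2) (t, x) (1, 0)
    with hDdef
  have hDt : ∀ t x : ℝ, HasDerivAt (fun s => u s x) (D t x) t := by
    intro t x
    have h1 : HasDerivAt (fun s : ℝ => (s, x)) ((1:ℝ), (0:ℝ)) t :=
      (hasDerivAt_id t).prodMk (hasDerivAt_const t x)
    exact ((hUd (t, x)).hasFDerivAt).comp_hasDerivAt t h1
  have hDcont : Continuous (fun q : ℝ × ℝ => D q.1 q.2) := by
    have h1 : Continuous (fun q : ℝ × ℝ => fderiv ℝ (fun q : ℝ × ℝ => u q.1 q.2) q) :=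
      hU.continuous_fderiv (by simp)
    exact (h1.clm_apply continuous_const).comp (continuous_fst.prodMk continuous_snd)
  have huc : ∀ s : ℝ, Continuous (u s) := by
    intro s
    exact hU.continuous.comp (continuous_const.prodMk continuous_id)
  have hDc : ∀ s : ℝ, Continuous (D s) := by
    intro s
    exact hDcont.comp (continuous_const.prodMk continuous_id)
  set M : ℝ → ℝ := fun t => ∫ x in (-1:ℝ)..1, u t x with hMdef
  have hM : ∀ t : ℝ, HasDerivAt M (∫ x in (-1:ℝ)..1, D t x) t := by
    intro t₀
    -- uniform bound on the compact set
    obtain ⟨C, hC⟩ : ∃ C, ∀ p ∈ Icc (t₀-1) (t₀+1) ×ˢ Icc (-1:ℝ) 1,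
        ‖D p.1 p.2‖ ≤ C := by
      apply ((isCompact_Icc.prod isCompact_Icc).exists_bound_of_continuousOn)
      exact hDcont.continuousOn
    have key := intervalIntegral.hasDerivAt_integral_of_dominated_loc_of_deriv_le
      (F := fun s x => u s x) (F' := fun s x => D s x) (x₀ := t₀)
      (a := (-1:ℝ)) (b := 1) (bound := fun _ => C) (μ := volume)
      (s := Metric.ball t₀ 1) (Metric.ball_mem_nhds t₀ (by norm_num))
      (Filter.Eventually.of_forall fun s => ((huc s).aestronglyMeasurable).restrict)
      (((huc t₀)).intervalIntegrable _ _)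
      (((hDc t₀)).aestronglyMeasurable.restrict)
      ?_ (intervalIntegrable_const) ?_
    · exact key.2
    · apply Filter.Eventually.of_forall
      intro x hx s hs
      apply hC (s, x)
      constructor
      · have := Metric.mem_ball.mp hs
        have := abs_lt.mp (by simpa [Real.dist_eq] using this)
        exact ⟨by linarith [this.1], by linarith [this.2]⟩
      · rw [uIoc_of_le (by norm_num : (-1:ℝ) ≤ 1)] at hx
        exact ⟨hx.1.le, hx.2⟩
    · exact Filter.Eventually.of_forall fun x _ s _ => hDt s x
  -- derivative inequality
  have hDle : ∀ t ∈ Icc (0:ℝ) T, (∫ x in (-1:ℝ)..1, D t x) ≤ r * M t := by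
    intro t ht
    have hut : ContDiff ℝ (⊤ : ℕ∞) (u t) := hU.comp (contDiff_const.prodMk contDiff_id)
    have hφt : ContDiff ℝ (⊤ : ℕ∞) (φ t) := sol.smooth_phi.comp (contDiff_const.prodMk contDiff_id)
    have hut' : ContDiff ℝ (⊤:ℕ∞) (u t) := hut.of_le (by simp)
    have hφt' : ContDiff ℝ (⊤:ℕ∞) (φ t) := hφt.of_le (by simp)
    have hDeq2 : ∀ x ∈ Icc (-1:ℝ) 1, D t x
        = δ * deriv (deriv (u t)) x - deriv (fun y => u t y * φ t y) x
          + r * u t x * (1 - u t x) := by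
      intro x hx
      rw [← (hDt t x).deriv]
      exact sol.eq_u t ht x hx
    have h2nd : (∫ x in (-1:ℝ)..1, deriv (deriv (u t)) x) = 0 := by
      rw [integral_eq_sub_of_hasDerivAt
        (fun x _ => hasDerivAt_of_smooth' (smooth_deriv' hut') x)
        ((smooth_deriv' (smooth_deriv' hut')).continuous.intervalIntegrable _ _)]
      rw [(sol.bc_u t ht).1, (sol.bc_u t ht).2]
      ring
    have hprodC : ContDiff ℝ (⊤:ℕ∞) (fun y => u t y * φ t y) := hut'.mul hφt'
    have hprod : (∫ x in (-1:ℝ)..1, deriv (fun y => u t y * φ t y) x) = 0 := by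
      rw [integral_eq_sub_of_hasDerivAt
        (fun x _ => hasDerivAt_of_smooth' hprodC x)
        ((smooth_deriv' hprodC).continuous.intervalIntegrable _ _)]
      rw [(sol.bc_phi t ht).1, (sol.bc_phi t ht).2]
      ring
    have hsplit : (∫ x in (-1:ℝ)..1, D t x)
        = δ * (∫ x in (-1:ℝ)..1, deriv (deriv (u t)) x)
          - (∫ x in (-1:ℝ)..1, deriv (fun y => u t y * φ t y) x)
          + r * ∫ x in (-1:ℝ)..1, u t x * (1 - u t x) := by
      have hcongr : (∫ x in (-1:ℝ)..1, D t x)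
          = ∫ x in (-1:ℝ)..1, (δ * deriv (deriv (u t)) x
            - deriv (fun y => u t y * φ t y) x + r * (u t x * (1 - u t x))) := by
        apply intervalIntegral.integral_congr
        intro x hx
        rw [uIcc_of_le (by norm_num)] at hx
        rw [hDeq2 x hx]; ring
      rw [hcongr]
      have i1 : IntervalIntegrable (fun x => δ * deriv (deriv (u t)) x) volume (-1) 1 :=
        (continuous_const.mul (smooth_deriv' (smooth_deriv' hut')).continuous).intervalIntegrable _ _
      have i2 : IntervalIntegrable (fun x => deriv (fun y => u t y * φ t y) x) volume (-1) 1 :=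
        ((smooth_deriv' hprodC).continuous).intervalIntegrable _ _
      have i3 : IntervalIntegrable (fun x => r * (u t x * (1 - u t x))) volume (-1) 1 :=
        (continuous_const.mul ((huc t).mul (continuous_const.sub (huc t)))).intervalIntegrable _ _
      rw [intervalIntegral.integral_add (i1.sub i2) i3, intervalIntegral.integral_sub i1 i2,
        intervalIntegral.integral_const_mul, intervalIntegral.integral_const_mul]
    have hlog : (∫ x in (-1:ℝ)..1, u t x * (1 - u t x)) ≤ ∫ x in (-1:ℝ)..1, u t x := by
      apply intervalIntegral.integral_mono_on (by norm_num)
        (((huc t).mul (continuous_const.sub (huc t))).intervalIntegrable _ _)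
        ((huc t).intervalIntegrable _ _)
      intro x hx
      have := sol.nonneg t ht x hx
      show u t x * (1 - u t x) ≤ u t x
      nlinarith [sq_nonneg (u t x)]
    rw [hsplit, h2nd, hprod]
    have := mul_le_mul_of_nonneg_left hlog hr
    rw [hMdef]
    simp only
    linarith
  -- Gronwall
  set G : ℝ → ℝ := fun t => Real.exp (-r*t) * M t with hGdef
  have hGd : ∀ t : ℝ, HasDerivAt G
      (Real.exp (-r*t) * (-r) * M t + Real.exp (-r*t) * ∫ x in (-1:ℝ)..1, D t x) t := by
    intro t
    have he : HasDerivAt (fun s : ℝ => Real.exp (-r*s)) (Real.exp (-r*t) * (-r)) t := by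
      simpa using (((hasDerivAt_id t).const_mul (-r)).exp)
    exact he.mul (hM t)
  have hanti : AntitoneOn G (Icc 0 T) := by
    apply antitoneOn_of_deriv_nonpos (convex_Icc 0 T)
    · exact Continuous.continuousOn (by
        apply continuous_iff_continuousAt.mpr
        intro t
        exact (hGd t).continuousAt)
    · intro t ht
      exact ((hGd t).differentiableAt).differentiableWithinAt
    · intro t ht
      rw [interior_Icc] at ht
      rw [(hGd t).deriv]
      have h1 := hDle t ⟨ht.1.le, ht.2.le⟩
      have h2 := mul_le_mul_of_nonneg_left h1 (Real.exp_pos (-r*t)).le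
      nlinarith [Real.exp_pos (-r*t)]
  intro t ht
  have hG0 : G t ≤ G 0 := hanti (left_mem_Icc.mpr hT.le) ht ht.1
  have hM0 : M 0 = ∫ x in (-1:ℝ)..1, u₀ x := by
    apply intervalIntegral.integral_congr
    intro x hx
    rw [uIcc_of_le (by norm_num)] at hx
    exact sol.init x hx
  have hM0n : 0 ≤ M 0 := intervalIntegral.integral_nonneg (by norm_num)
    (fun x hx => sol.nonneg 0 (left_mem_Icc.mpr hT.le) x hx)
  have hGt : Real.exp (-r*t) * M t ≤ M 0 := by
    have : G 0 = M 0 := by rw [hGdef]; simp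
    rw [← this]
    exact hG0
  have hMt : M t ≤ Real.exp (r*t) * M 0 := by
    have h1 := mul_le_mul_of_nonneg_left hGt (Real.exp_pos (r*t)).le
    have h2 : Real.exp (r*t) * (Real.exp (-r*t) * M t) = M t := by
      rw [← mul_assoc, ← Real.exp_add]
      simp
    rw [h2] at h1
    exact h1
  have hexp : Real.exp (r*t) ≤ Real.exp (r*T) :=
    Real.exp_le_exp.mpr (by nlinarith [ht.1, ht.2])
  calc (∫ x in (-1:ℝ)..1, u t x) = M t := rfl
    _ ≤ Real.exp (r*t) * M 0 := hMt
    _ ≤ Real.exp (r*T) * M 0 := mul_le_mul_of_nonneg_right hexp hM0n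
    _ = Real.exp (r*T) * ∫ x in (-1:ℝ)..1, u₀ x := by rw [hM0]

theorem phi_L2_bound_monostable (T ε r : ℝ) (u₀ : ℝ → ℝ)
    (hT : 0 < T) (hε : 0 < ε) (hr : 0 ≤ r)
    (hu₀ : ContDiff ℝ (⊤ : ℕ∞) u₀) (hu₀nonneg : ∀ x ∈ Set.Icc (-1:ℝ) 1, 0 ≤ u₀ x) :
    ∃ C₉ > (0:ℝ), ∀ δ ∈ Set.Ioo (0:ℝ) 1, ∀ u φ : ℝ → ℝ → ℝ, IsMonostableSol T ε r δ u₀ u φ →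
      ∀ t ∈ Set.Icc (0:ℝ) T, pnorm 2 (φ t) ≤ C₉ := by
  obtain ⟨C, hCpos, hC⟩ := elliptic_bound ε hε
  set K : ℝ := Real.exp (r*T) * ∫ x in (-1:ℝ)..1, u₀ x with hKdef
  have hK0 : 0 ≤ K := by
    apply mul_nonneg (Real.exp_pos _).le
    exact intervalIntegral.integral_nonneg (by norm_num) hu₀nonneg
  refine ⟨2*(C*K) + 1, by positivity, ?_⟩
  intro δ hδ u φ sol t ht
  have hut : ContDiff ℝ (⊤ : ℕ∞) (u t) := sol.smooth_u.comp (contDiff_const.prodMk contDiff_id)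
  have hφt : ContDiff ℝ (⊤ : ℕ∞) (φ t) := sol.smooth_phi.comp (contDiff_const.prodMk contDiff_id)
  have heq : ∀ x ∈ Icc (-1:ℝ) 1,
      ε * deriv (deriv (φ t)) x = φ t x + deriv (u t) x := by
    intro x hx
    have := sol.eq_phi t ht x hx
    linarith
  have hbc := sol.bc_phi t ht
  have hptw := hC (φ t) (u t) hφt hut heq hbc.1 hbc.2
  -- L¹ norm of u t equals its integral and is bounded by K
  have habs : (∫ y in (-1:ℝ)..1, |u t y|) = ∫ y in (-1:ℝ)..1, u t y := by
    apply intervalIntegral.integral_congr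
    intro y hy
    rw [uIcc_of_le (by norm_num)] at hy
    exact abs_of_nonneg (sol.nonneg t ht y hy)
  have hL1 : (∫ y in (-1:ℝ)..1, |u t y|) ≤ K := by
    rw [habs, hKdef]
    exact mass_bound T ε r δ u₀ u φ hT hr sol t ht
  set B : ℝ := C * K with hBdef
  have hB0 : 0 ≤ B := by positivity
  have hbound : ∀ x ∈ Icc (-1:ℝ) 1, |φ t x| ≤ B := by
    intro x hx
    calc |φ t x| ≤ C * ∫ y in (-1:ℝ)..1, |u t y| := hptw x hx
      _ ≤ B := by rw [hBdef]; exact mul_le_mul_of_nonneg_left hL1 hCpos.le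
  -- now bound the L² norm
  have hcont : Continuous (φ t) := hφt.continuous
  have hint : (∫ x in (-1:ℝ)..1, |φ t x| ^ (2:ℝ)) ≤ 2 * B^2 := by
    have hcg : (∫ x in (-1:ℝ)..1, |φ t x| ^ (2:ℝ))
        = ∫ x in (-1:ℝ)..1, |φ t x| ^ (2:ℕ) := by
      apply intervalIntegral.integral_congr
      intro x _
      show |φ t x| ^ (2:ℝ) = |φ t x| ^ (2:ℕ)
      rw [show (2:ℝ) = ((2:ℕ):ℝ) by norm_num, Real.rpow_natCast]
    rw [hcg]
    have hmono : (∫ x in (-1:ℝ)..1, |φ t x| ^ (2:ℕ)) ≤ ∫ x in (-1:ℝ)..1, B^(2:ℕ) := by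
      apply intervalIntegral.integral_mono_on (by norm_num)
        ((hcont.abs.pow 2).intervalIntegrable _ _) intervalIntegrable_const
      intro x hx
      exact pow_le_pow_left₀ (abs_nonneg _) (hbound x hx) 2
    rw [intervalIntegral.integral_const] at hmono
    have : ((1:ℝ) - (-1)) • (B^(2:ℕ)) = 2 * B^2 := by norm_num
    linarith [hmono, this.le, this.ge]
  have hq0 : (0:ℝ) ≤ ∫ x in (-1:ℝ)..1, |φ t x| ^ (2:ℝ) :=
    intervalIntegral.integral_nonneg (by norm_num)
      (fun x _ => Real.rpow_nonneg (abs_nonneg _) _)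
  have hfin : pnorm 2 (φ t) ≤ (2*B^2) ^ ((1:ℝ)/2) := by
    rw [pnorm]
    exact Real.rpow_le_rpow hq0 hint (by norm_num)
  have hlast : (2*B^2 : ℝ) ^ ((1:ℝ)/2) ≤ 2*B + 1 := by
    rw [← Real.sqrt_eq_rpow]
    calc Real.sqrt (2*B^2) ≤ Real.sqrt ((2*B+1)^2) := by
          apply Real.sqrt_le_sqrt
          nlinarith
      _ = 2*B+1 := Real.sqrt_sq (by linarith)
  calc pnorm 2 (φ t) ≤ (2*B^2 : ℝ) ^ ((1:ℝ)/2) := hfin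
    _ ≤ 2*B + 1 := hlast
    _ = 2*(C*K) + 1 := by rw [hBdef]
end

section
/- There exists a constant C₁₀ > 0, depending only on T, ε, r and u₀ (but not on δ), such that for every δ∈(0,1) and every classical solution (u,φ) of the monostable system with diffusion δ satisfying in addition u(t,x) > 0 for all (t,x)∈[0,T]×[-1,1], one has ‖∂ₓu(t,·)‖₁ ≤ C₁₀ for all t∈[0,T]. -/
open Set MeasureTheory

noncomputable def P1 (Φ : ℝ × ℝ → ℝ) (p : ℝ × ℝ) : ℝ := fderiv ℝ Φ p (1, 0)
noncomputable def P2 (Φ : ℝ × ℝ → ℝ) (p : ℝ × ℝ) : ℝ := fderiv ℝ Φ p (0, 1)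

lemma hasDerivAt_P1slice {Φ : ℝ × ℝ → ℝ} (hΦ : ContDiff ℝ (⊤:ℕ∞) Φ) (t x : ℝ) :
    HasDerivAt (fun s => Φ (s, x)) (P1 Φ (t, x)) t := by
  have h1 : HasFDerivAt Φ (fderiv ℝ Φ (t, x)) (t, x) :=
    (hΦ.differentiable (by simp) (t, x)).hasFDerivAt
  have h2 : HasDerivAt (fun s : ℝ => ((s, x) : ℝ × ℝ)) ((1 : ℝ), (0 : ℝ)) t := by
    simpa using ((hasDerivAt_id t).prodMk (hasDerivAt_const t x))
  simpa [P1, Function.comp_def] using (h1.comp_hasDerivAt t h2)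

lemma hasDerivAt_P2slice {Φ : ℝ × ℝ → ℝ} (hΦ : ContDiff ℝ (⊤:ℕ∞) Φ) (t x : ℝ) :
    HasDerivAt (fun y => Φ (t, y)) (P2 Φ (t, x)) x := by
  have h1 : HasFDerivAt Φ (fderiv ℝ Φ (t, x)) (t, x) :=
    (hΦ.differentiable (by simp) (t, x)).hasFDerivAt
  have h2 : HasDerivAt (fun y : ℝ => ((t, y) : ℝ × ℝ)) ((0 : ℝ), (1 : ℝ)) x := by
    simpa using ((hasDerivAt_const x t).prodMk (hasDerivAt_id x))
  simpa [P2, Function.comp_def] using (h1.comp_hasDerivAt x h2)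

lemma contDiff_P1 {Φ : ℝ × ℝ → ℝ} (hΦ : ContDiff ℝ (⊤:ℕ∞) Φ) : ContDiff ℝ (⊤:ℕ∞) (P1 Φ) := by
  have h := (hΦ.fderiv_right (m := (⊤:ℕ∞)) (by exact_mod_cast le_top))
  exact (ContinuousLinearMap.apply ℝ ℝ ((1:ℝ), (0:ℝ))).contDiff.comp h

lemma contDiff_P2 {Φ : ℝ × ℝ → ℝ} (hΦ : ContDiff ℝ (⊤:ℕ∞) Φ) : ContDiff ℝ (⊤:ℕ∞) (P2 Φ) := by
  have h := (hΦ.fderiv_right (m := (⊤:ℕ∞)) (by exact_mod_cast le_top))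
  exact (ContinuousLinearMap.apply ℝ ℝ ((0:ℝ), (1:ℝ))).contDiff.comp h

lemma P1_eq_comp (Φ : ℝ × ℝ → ℝ) :
    P1 Φ = fun p => (ContinuousLinearMap.apply ℝ ℝ ((1:ℝ), (0:ℝ))) (fderiv ℝ Φ p) := rfl

lemma fderiv_P (v : ℝ × ℝ) {Φ : ℝ × ℝ → ℝ} (hΦ : ContDiff ℝ (⊤:ℕ∞) Φ) (p : ℝ × ℝ) (w : ℝ × ℝ) :
    fderiv ℝ (fun q => fderiv ℝ Φ q v) p w = fderiv ℝ (fderiv ℝ Φ) p w v := by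
  have hd : HasFDerivAt (fderiv ℝ Φ) (fderiv ℝ (fderiv ℝ Φ) p) p :=
    (((hΦ.fderiv_right (m := (⊤:ℕ∞)) (by exact_mod_cast le_top)).differentiable (by simp)) p).hasFDerivAt
  have : HasFDerivAt (fun q => (ContinuousLinearMap.apply ℝ ℝ v) (fderiv ℝ Φ q))
      ((ContinuousLinearMap.apply ℝ ℝ v).comp (fderiv ℝ (fderiv ℝ Φ) p)) p :=
    (ContinuousLinearMap.apply ℝ ℝ v).hasFDerivAt.comp p hd
  simpa using congrArg (fun L => L w) this.fderiv

lemma P1_P2_symm {Φ : ℝ × ℝ → ℝ} (hΦ : ContDiff ℝ (⊤:ℕ∞) Φ) (p : ℝ × ℝ) :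
    P1 (P2 Φ) p = P2 (P1 Φ) p := by
  have hf : ∀ y, HasFDerivAt Φ (fderiv ℝ Φ y) y := fun y =>
    (hΦ.differentiable (by simp) y).hasFDerivAt
  have hx : HasFDerivAt (fderiv ℝ Φ) (fderiv ℝ (fderiv ℝ Φ) p) p :=
    (((hΦ.fderiv_right (m := (⊤:ℕ∞)) (by exact_mod_cast le_top)).differentiable (by simp)) p).hasFDerivAt
  have hs := second_derivative_symmetric hf hx ((1:ℝ), (0:ℝ)) ((0:ℝ), (1:ℝ))
  have e1 : P1 (P2 Φ) p = fderiv ℝ (fderiv ℝ Φ) p (1, 0) (0, 1) := by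
    simp only [P1, P2]
    exact fderiv_P _ hΦ p _
  have e2 : P2 (P1 Φ) p = fderiv ℝ (fderiv ℝ Φ) p (0, 1) (1, 0) := by
    simp only [P1, P2]
    exact fderiv_P _ hΦ p _
  rw [e1, e2, hs]


lemma deriv_differentiable_of_smooth {g : ℝ → ℝ} (hg : ContDiff ℝ (⊤:ℕ∞) g) :
    Differentiable ℝ (deriv g) := by
  have h2 := (contDiff_infty_iff_deriv.mp (hg)).2
  exact h2.differentiable (by simp)

lemma deriv_smooth_of_smooth {g : ℝ → ℝ} (hg : ContDiff ℝ (⊤:ℕ∞) g) :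
    ContDiff ℝ (⊤:ℕ∞) (deriv g) := by
  exact_mod_cast (contDiff_infty_iff_deriv.mp (hg)).2

/-- If `g` is `C^∞`, has a max over `Icc a b` at `c ∈ Icc a b`, and `deriv g c = 0`,
then `deriv (deriv g) c ≤ 0`. -/
lemma second_deriv_nonpos_at_max {g : ℝ → ℝ} (hg : ContDiff ℝ (⊤:ℕ∞) g) {a b c : ℝ}
    (hab : a < b) (hc : c ∈ Icc a b) (hmax : ∀ x ∈ Icc a b, g x ≤ g c)
    (hd : deriv g c = 0) : deriv (deriv g) c ≤ 0 := by
  by_contra hpos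
  push_neg at hpos
  have hg' : Differentiable ℝ g := hg.differentiable (by simp)
  have hg'' : Differentiable ℝ (deriv g) := deriv_differentiable_of_smooth hg
  have hda : HasDerivAt (deriv g) (deriv (deriv g) c) c := (hg'' c).hasDerivAt
  have hslope := hasDerivAt_iff_tendsto_slope.mp hda
  have hev : ∀ᶠ x in nhdsWithin c {c}ᶜ, 0 < slope (deriv g) c x :=
    hslope.eventually (eventually_gt_nhds hpos)
  rcases lt_or_ge c b with hcb | hcb
  · have hev' : ∀ᶠ x in nhdsWithin c (Ioi c), 0 < slope (deriv g) c x :=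
      hev.filter_mono (nhdsWithin_mono c (fun x hx => ne_of_gt hx))
    rcases (mem_nhdsGT_iff_exists_Ioc_subset).mp hev' with ⟨d, hd1, hd2⟩
    have hd1' : c < d := hd1
    set e := min d b with he
    have hce : c < e := lt_min hd1' hcb
    have hmono : StrictMonoOn g (Icc c e) := by
      apply strictMonoOn_of_deriv_pos (convex_Icc c e) (hg'.continuous.continuousOn)
      intro x hx
      rw [interior_Icc] at hx
      have hxm : x ∈ Ioc c d := ⟨hx.1, le_of_lt (lt_of_lt_of_le hx.2 (min_le_left d b))⟩
      have h0 := hd2 hxm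
      simp only [mem_setOf_eq] at h0
      have h4 : 0 < (deriv g x - deriv g c) / (x - c) := by rwa [slope_def_field] at h0
      rw [hd, sub_zero] at h4
      rcases div_pos_iff.mp h4 with h5 | h5
      · exact h5.1
      · exact absurd h5.2 (by simp [sub_pos.mpr hx.1, not_lt]; linarith [hx.1])
    have hlt : g c < g e := hmono (left_mem_Icc.mpr hce.le) (right_mem_Icc.mpr hce.le) hce
    have : g e ≤ g c := hmax e ⟨le_trans hc.1 hce.le, min_le_right d b⟩
    linarith
  · have hca : a < c := lt_of_lt_of_le hab hcb
    have hev' : ∀ᶠ x in nhdsWithin c (Iio c), 0 < slope (deriv g) c x :=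
      hev.filter_mono (nhdsWithin_mono c (fun x hx => ne_of_lt hx))
    rcases (mem_nhdsLT_iff_exists_Ico_subset).mp hev' with ⟨d, hd1, hd2⟩
    have hd1' : d < c := hd1
    set e := max d a with he
    have hce : e < c := max_lt hd1' hca
    have hanti : StrictAntiOn g (Icc e c) := by
      apply strictAntiOn_of_deriv_neg (convex_Icc e c) (hg'.continuous.continuousOn)
      intro x hx
      rw [interior_Icc] at hx
      have hxm : x ∈ Ico d c := ⟨le_of_lt (lt_of_le_of_lt (le_max_left d a) hx.1), hx.2⟩
      have h0 := hd2 hxm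
      simp only [mem_setOf_eq] at h0
      have h4 : 0 < (deriv g x - deriv g c) / (x - c) := by rwa [slope_def_field] at h0
      rw [hd, sub_zero] at h4
      rcases div_pos_iff.mp h4 with h5 | h5
      · exact absurd h5.2 (by simp [not_lt]; linarith [hx.2])
      · exact h5.1
    have hlt : g c < g e := hanti (left_mem_Icc.mpr hce.le) (right_mem_Icc.mpr hce.le) hce
    have : g e ≤ g c := hmax e ⟨le_max_right d a, hce.le.trans hc.2⟩
    linarith

/-- One-sided: if `f` is differentiable at `t₀` and `f t ≤ f t₀` for `t ∈ [a, t₀]` with `a < t₀`,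
then `0 ≤ deriv f t₀`. -/
lemma deriv_nonneg_of_left_max {f : ℝ → ℝ} {a t₀ : ℝ} (ha : a < t₀)
    (hf : DifferentiableAt ℝ f t₀) (h : ∀ t ∈ Icc a t₀, f t ≤ f t₀) :
    0 ≤ deriv f t₀ := by
  have hda : HasDerivAt f (deriv f t₀) t₀ := hf.hasDerivAt
  have hslope := hasDerivAt_iff_tendsto_slope.mp hda
  have hslope' : Filter.Tendsto (slope f t₀) (nhdsWithin t₀ (Iio t₀)) (nhds (deriv f t₀)) :=
    hslope.mono_left (nhdsWithin_mono t₀ (fun x hx => ne_of_lt hx))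
  refine ge_of_tendsto hslope' ?_
  have hmem : Ioo a t₀ ∈ nhdsWithin t₀ (Iio t₀) :=
    mem_nhdsWithin.mpr ⟨Ioi a, isOpen_Ioi, ha, by intro x hx; exact ⟨hx.1, hx.2⟩⟩
  filter_upwards [hmem] with x hx
  have h1 : f x ≤ f t₀ := h x ⟨hx.1.le, hx.2.le⟩
  have h2 : x - t₀ < 0 := sub_neg.mpr hx.2
  rw [slope_def_field]
  exact div_nonneg_of_nonpos (by linarith) h2.le

/-- Functions continuous on ℝ that agree on `Ioo a b` agree on `Icc a b`. -/
lemma eq_on_Icc_of_eq_on_Ioo {f g : ℝ → ℝ} (hf : Continuous f) (hg : Continuous g)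
    {a b : ℝ} (hab : a < b) (h : ∀ x ∈ Ioo a b, f x = g x) :
    ∀ x ∈ Icc a b, f x = g x := by
  have heq : EqOn f g (closure (Ioo a b)) :=
    (Set.EqOn.closure (fun x hx => h x hx) hf hg)
  intro x hx
  exact heq (by rwa [closure_Ioo (ne_of_lt hab)])


noncomputable def bet (s : ℝ) : ℝ := Real.sqrt (s ^ 2 + 1)
noncomputable def bet' (s : ℝ) : ℝ := s / Real.sqrt (s ^ 2 + 1)

lemma sq1_pos (s : ℝ) : 0 < s ^ 2 + 1 := by positivity
lemma sqrt_sq1_pos (s : ℝ) : 0 < Real.sqrt (s ^ 2 + 1) := Real.sqrt_pos.mpr (sq1_pos s)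
lemma sqrt_sq1_sq (s : ℝ) : Real.sqrt (s ^ 2 + 1) ^ 2 = s ^ 2 + 1 :=
  Real.sq_sqrt (sq1_pos s).le

lemma hasDerivAt_bet (s : ℝ) : HasDerivAt bet (bet' s) s := by
  have h1 : HasDerivAt (fun s : ℝ => s ^ 2 + 1) (2 * s) s := by
    simpa using ((hasDerivAt_pow 2 s).add_const 1)
  have h2 := (Real.hasDerivAt_sqrt (ne_of_gt (sq1_pos s))).comp s h1
  have heq : (1 / (2 * Real.sqrt (s ^ 2 + 1))) * (2 * s) = bet' s := by
    rw [bet']; field_simp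
  have h3 : HasDerivAt (fun s : ℝ => Real.sqrt (s ^ 2 + 1)) (bet' s) s := by
    rw [← heq]; exact h2
  exact h3

lemma hasDerivAt_bet' (s : ℝ) :
    HasDerivAt bet' (1 / Real.sqrt (s ^ 2 + 1) ^ 3) s := by
  have h1 : HasDerivAt (fun s : ℝ => Real.sqrt (s ^ 2 + 1)) (bet' s) s := hasDerivAt_bet s
  have h2 := (hasDerivAt_id s).div h1 (ne_of_gt (sqrt_sq1_pos s))
  have heq : (1 * Real.sqrt (s ^ 2 + 1) - s * bet' s) / Real.sqrt (s ^ 2 + 1) ^ 2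
      = 1 / Real.sqrt (s ^ 2 + 1) ^ 3 := by
    rw [bet']
    have h3 := sqrt_sq1_sq s
    have h4 := (sqrt_sq1_pos s).ne'
    field_simp
    nlinarith [sqrt_sq1_pos s]
  have h5 : HasDerivAt (fun y : ℝ => y / Real.sqrt (y ^ 2 + 1))
      (1 / Real.sqrt (s ^ 2 + 1) ^ 3) s := by
    rw [← heq]
    exact h2
  exact h5

lemma abs_le_bet (s : ℝ) : |s| ≤ bet s := by
  rw [bet, ← Real.sqrt_sq_eq_abs]
  exact Real.sqrt_le_sqrt (by linarith)

lemma bet_nonneg (s : ℝ) : 0 ≤ bet s := Real.sqrt_nonneg _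

lemma bet_le (s : ℝ) : bet s ≤ |s| + 1 := by
  rw [bet]
  have h1 : s ^ 2 + 1 ≤ (|s| + 1) ^ 2 := by
    have := abs_nonneg s
    nlinarith [sq_abs s]
  calc Real.sqrt (s ^ 2 + 1) ≤ Real.sqrt ((|s| + 1) ^ 2) := Real.sqrt_le_sqrt h1
    _ = |s| + 1 := by
        rw [Real.sqrt_sq (by positivity)]

lemma abs_bet'_le_one (s : ℝ) : |bet' s| ≤ 1 := by
  rw [bet', abs_div, abs_of_pos (sqrt_sq1_pos s)]
  rw [div_le_one (sqrt_sq1_pos s)]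
  exact (abs_le_bet s).trans_eq rfl

lemma bet'_zero : bet' 0 = 0 := by simp [bet']

lemma abs_bet'_mul_le (s : ℝ) : |bet' s * s| ≤ |s| := by
  rw [abs_mul]
  calc |bet' s| * |s| ≤ 1 * |s| := by
        apply mul_le_mul_of_nonneg_right (abs_bet'_le_one s) (abs_nonneg s)
    _ = |s| := one_mul _

lemma continuous_bet : Continuous bet := by
  apply Real.continuous_sqrt.comp; continuity

lemma continuous_bet' : Continuous bet' := by
  apply Continuous.div continuous_id (Real.continuous_sqrt.comp (by continuity))
  intro s; exact (sqrt_sq1_pos s).ne'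

lemma continuous_betd : Continuous (fun s => 1 / Real.sqrt (s ^ 2 + 1) ^ 3) := by
  apply Continuous.div continuous_const
  · exact (Real.continuous_sqrt.comp (by continuity)).pow 3
  · intro s; positivity

section Kato

open intervalIntegral

/-- Generic Kato-type estimate for the derivative of `∫ β(u_x)`. -/
lemma kato_estimate (δ r ε M : ℝ) (uu ux uxx uxxx φt φx φxx : ℝ → ℝ)
    (hD2 : ∀ x, HasDerivAt ux (uxx x) x) (hD3 : ∀ x, HasDerivAt uxx (uxxx x) x)
    (hE1 : ∀ x, HasDerivAt φt (φx x) x)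
    (hcu : Continuous uu) (hcuxxx : Continuous uxxx) (hcφx : Continuous φx)
    (hcφxx : Continuous φxx)
    (hbc1 : ux (-1) = 0) (hbc2 : ux 1 = 0) (hbcφ1 : φt (-1) = 0) (hbcφ2 : φt 1 = 0)
    (hδ : 0 ≤ δ) (hr : 0 ≤ r) (hεp : 0 < ε) (hMpos : 0 < M)
    (hφxb : ∀ y ∈ Set.Icc (-1:ℝ) 1, |φx y| ≤ M / ε)
    (hφtb : ∀ y ∈ Set.Icc (-1:ℝ) 1, |φt y| ≤ 2 * M / ε)
    (hub : ∀ y ∈ Set.Icc (-1:ℝ) 1, 0 ≤ uu y ∧ uu y ≤ M)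
    (hφxxb : ∀ y ∈ Set.Icc (-1:ℝ) 1, |φxx y| ≤ (2 * M / ε + bet (ux y)) / ε) :
    (∫ x in (-1:ℝ)..1, (δ * (bet' (ux x) * uxxx x) - φt x * (bet' (ux x) * uxx x)
        - 2 * (bet' (ux x) * ux x * φx x) - bet' (ux x) * uu x * φxx x
        + r * (bet' (ux x) * ux x * (1 - 2 * uu x))))
      ≤ (4 * M / ε + r * (1 + 2 * M)) * (∫ x in (-1:ℝ)..1, bet (ux x)) + 4 * M ^ 2 / ε ^ 2 := by
  have hdux : Differentiable ℝ ux := fun x => (hD2 x).differentiableAt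
  have hduxx : Differentiable ℝ uxx := fun x => (hD3 x).differentiableAt
  have hdφt : Differentiable ℝ φt := fun x => (hE1 x).differentiableAt
  have hcux : Continuous ux := hdux.continuous
  have hcuxx : Continuous uxx := hduxx.continuous
  have hcφt : Continuous φt := hdφt.continuous
  have hII : ∀ (f : ℝ → ℝ), Continuous f → IntervalIntegrable f MeasureTheory.volume (-1:ℝ) 1 :=
    fun f hf => hf.intervalIntegrable _ _
  set Wloc : ℝ := ∫ x in (-1:ℝ)..1, bet (ux x) with hWloc
  have hWnn : 0 ≤ Wloc := by
    apply intervalIntegral.integral_nonneg (by norm_num)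
    intro x _
    exact bet_nonneg _
  -- continuity of the pieces
  have hc1 : Continuous (fun x => bet' (ux x) * uxxx x) := (continuous_bet'.comp hcux).mul hcuxxx
  have hc2 : Continuous (fun x => φt x * (bet' (ux x) * uxx x)) :=
    hcφt.mul ((continuous_bet'.comp hcux).mul hcuxx)
  have hc3 : Continuous (fun x => bet' (ux x) * ux x * φx x) :=
    ((continuous_bet'.comp hcux).mul hcux).mul hcφx
  have hc4 : Continuous (fun x => bet' (ux x) * uu x * φxx x) :=
    ((continuous_bet'.comp hcux).mul hcu).mul hcφxx
  have hc5 : Continuous (fun x => bet' (ux x) * ux x * (1 - 2 * uu x)) :=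
    ((continuous_bet'.comp hcux).mul hcux).mul
      (continuous_const.sub (continuous_const.mul hcu))
  have hcbet : Continuous (fun x => bet (ux x)) := continuous_bet.comp hcux
  -- split the integral
  have hsplit : (∫ x in (-1:ℝ)..1, (δ * (bet' (ux x) * uxxx x) - φt x * (bet' (ux x) * uxx x)
        - 2 * (bet' (ux x) * ux x * φx x) - bet' (ux x) * uu x * φxx x
        + r * (bet' (ux x) * ux x * (1 - 2 * uu x))))
      = δ * (∫ x in (-1:ℝ)..1, bet' (ux x) * uxxx x)
        - (∫ x in (-1:ℝ)..1, φt x * (bet' (ux x) * uxx x))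
        - 2 * (∫ x in (-1:ℝ)..1, bet' (ux x) * ux x * φx x)
        - (∫ x in (-1:ℝ)..1, bet' (ux x) * uu x * φxx x)
        + r * (∫ x in (-1:ℝ)..1, bet' (ux x) * ux x * (1 - 2 * uu x)) := by
    rw [intervalIntegral.integral_add
        (hII _ ((((continuous_const.fun_mul hc1).fun_sub hc2).fun_sub (continuous_const.fun_mul hc3)).fun_sub hc4))
        (hII _ (continuous_const.fun_mul hc5))]
    rw [intervalIntegral.integral_sub
        (hII _ (((continuous_const.fun_mul hc1).fun_sub hc2).fun_sub (continuous_const.fun_mul hc3))) (hII _ hc4)]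
    rw [intervalIntegral.integral_sub (hII _ ((continuous_const.fun_mul hc1).fun_sub hc2)) (hII _ (continuous_const.fun_mul hc3))]
    rw [intervalIntegral.integral_sub (hII _ (continuous_const.fun_mul hc1)) (hII _ hc2)]
    rw [intervalIntegral.integral_const_mul, intervalIntegral.integral_const_mul,
      intervalIntegral.integral_const_mul]
  rw [hsplit]
  -- (1) dissipative term
  have hI1 : (∫ x in (-1:ℝ)..1, bet' (ux x) * uxxx x) ≤ 0 := by
    have hres1 := intervalIntegral.integral_mul_deriv_eq_deriv_mul
      (u := fun x => bet' (ux x)) (v := uxx)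
      (u' := fun x => 1 / Real.sqrt ((ux x) ^ 2 + 1) ^ 3 * uxx x) (v' := uxxx)
      (fun x _ => by
        simpa [Function.comp_def] using (hasDerivAt_bet' (ux x)).comp x (hD2 x))
      (fun x _ => hD3 x)
      (hII _ ((continuous_betd.comp hcux).mul hcuxx))
      (hII _ hcuxxx)
    rw [hres1]
    beta_reduce
    rw [hbc1, hbc2, bet'_zero]
    simp only [zero_mul, sub_zero, zero_sub]
    rw [neg_nonpos]
    apply intervalIntegral.integral_nonneg (by norm_num)
    intro x _
    have heq : 1 / Real.sqrt ((ux x) ^ 2 + 1) ^ 3 * uxx x * uxx x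
        = 1 / Real.sqrt ((ux x) ^ 2 + 1) ^ 3 * (uxx x) ^ 2 := by ring
    rw [heq]
    have h0 := sqrt_sq1_pos (ux x)
    positivity
  -- (2) term with φ after integration by parts
  have hI2 : -(∫ x in (-1:ℝ)..1, φt x * (bet' (ux x) * uxx x)) ≤ M / ε * Wloc := by
    have hres2 := intervalIntegral.integral_mul_deriv_eq_deriv_mul
      (u := φt) (v := fun x => bet (ux x)) (u' := φx) (v' := fun x => bet' (ux x) * uxx x)
      (fun x _ => hE1 x)
      (fun x _ => by
        simpa [Function.comp_def] using (hasDerivAt_bet (ux x)).comp x (hD2 x))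
      (hII _ hcφx)
      (hII _ ((continuous_bet'.comp hcux).mul hcuxx))
    rw [hres2]
    beta_reduce
    rw [hbcφ1, hbcφ2]
    simp only [zero_mul, sub_zero, zero_sub, neg_neg]
    calc (∫ x in (-1:ℝ)..1, φx x * bet (ux x))
        ≤ ∫ x in (-1:ℝ)..1, M / ε * bet (ux x) := by
          apply intervalIntegral.integral_mono_on (by norm_num)
            (hII _ (hcφx.mul hcbet)) (hII _ (continuous_const.mul hcbet))
          intro x hx
          apply mul_le_mul_of_nonneg_right _ (bet_nonneg _)
          exact le_trans (le_abs_self _) (hφxb x hx)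
      _ = M / ε * Wloc := by rw [intervalIntegral.integral_const_mul]
  -- (3)
  have hI3 : -(∫ x in (-1:ℝ)..1, bet' (ux x) * ux x * φx x) ≤ M / ε * Wloc := by
    have habs : -(∫ x in (-1:ℝ)..1, bet' (ux x) * ux x * φx x)
        ≤ ∫ x in (-1:ℝ)..1, |bet' (ux x) * ux x * φx x| :=
      le_trans (neg_le_abs _) (intervalIntegral.abs_integral_le_integral_abs (by norm_num))
    refine le_trans habs ?_
    calc (∫ x in (-1:ℝ)..1, |bet' (ux x) * ux x * φx x|)
        ≤ ∫ x in (-1:ℝ)..1, M / ε * bet (ux x) := by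
          apply intervalIntegral.integral_mono_on (by norm_num)
            (hII _ (hc3.abs)) (hII _ (continuous_const.mul hcbet))
          intro x hx
          rw [abs_mul]
          have h1 : |bet' (ux x) * ux x| ≤ bet (ux x) :=
            le_trans (abs_bet'_mul_le _) (abs_le_bet _)
          have h2 : |φx x| ≤ M / ε := hφxb x hx
          calc |bet' (ux x) * ux x| * |φx x| ≤ bet (ux x) * (M / ε) := by
                apply mul_le_mul h1 h2 (abs_nonneg _) (bet_nonneg _)
            _ = M / ε * bet (ux x) := by ring
      _ = M / ε * Wloc := by rw [intervalIntegral.integral_const_mul]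
  -- (4)
  have hI4 : -(∫ x in (-1:ℝ)..1, bet' (ux x) * uu x * φxx x)
      ≤ 4 * M ^ 2 / ε ^ 2 + M / ε * Wloc := by
    have habs : -(∫ x in (-1:ℝ)..1, bet' (ux x) * uu x * φxx x)
        ≤ ∫ x in (-1:ℝ)..1, |bet' (ux x) * uu x * φxx x| :=
      le_trans (neg_le_abs _) (intervalIntegral.abs_integral_le_integral_abs (by norm_num))
    refine le_trans habs ?_
    calc (∫ x in (-1:ℝ)..1, |bet' (ux x) * uu x * φxx x|)
        ≤ ∫ x in (-1:ℝ)..1, (2 * M ^ 2 / ε ^ 2 + M / ε * bet (ux x)) := by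
          apply intervalIntegral.integral_mono_on (by norm_num)
            (hII _ (hc4.abs)) (hII _ (continuous_const.fun_add (continuous_const.fun_mul hcbet)))
          intro x hx
          rw [abs_mul, abs_mul]
          have h1 : |bet' (ux x)| ≤ 1 := abs_bet'_le_one _
          have h2 : |uu x| ≤ M := by
            rw [abs_of_nonneg (hub x hx).1]; exact (hub x hx).2
          have h3 : |φxx x| ≤ (2 * M / ε + bet (ux x)) / ε := hφxxb x hx
          have h4 : 0 ≤ bet (ux x) := bet_nonneg _
          have h5 : (0:ℝ) ≤ 2 * M / ε + bet (ux x) := by positivity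
          have hstep : |bet' (ux x)| * |uu x| * |φxx x| ≤ 1 * M * ((2 * M / ε + bet (ux x)) / ε) := by
            apply mul_le_mul _ h3 (abs_nonneg _) (by positivity)
            apply mul_le_mul h1 h2 (abs_nonneg _) (by norm_num)
          refine le_trans hstep ?_
          have heq2 : 1 * M * ((2 * M / ε + bet (ux x)) / ε)
              = 2 * M ^ 2 / ε ^ 2 + M / ε * bet (ux x) := by
            field_simp
          rw [heq2]
      _ = 4 * M ^ 2 / ε ^ 2 + M / ε * Wloc := by
          rw [intervalIntegral.integral_add (hII _ continuous_const) (hII _ (continuous_const.fun_mul hcbet)),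
            intervalIntegral.integral_const, intervalIntegral.integral_const_mul]
          simp only [smul_eq_mul]
          ring
  -- (5)
  have hI5 : (∫ x in (-1:ℝ)..1, bet' (ux x) * ux x * (1 - 2 * uu x))
      ≤ (1 + 2 * M) * Wloc := by
    have habs : (∫ x in (-1:ℝ)..1, bet' (ux x) * ux x * (1 - 2 * uu x))
        ≤ ∫ x in (-1:ℝ)..1, |bet' (ux x) * ux x * (1 - 2 * uu x)| :=
      le_trans (le_abs_self _) (intervalIntegral.abs_integral_le_integral_abs (by norm_num))
    refine le_trans habs ?_
    calc (∫ x in (-1:ℝ)..1, |bet' (ux x) * ux x * (1 - 2 * uu x)|)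
        ≤ ∫ x in (-1:ℝ)..1, (1 + 2 * M) * bet (ux x) := by
          apply intervalIntegral.integral_mono_on (by norm_num)
            (hII _ (hc5.abs)) (hII _ (continuous_const.mul hcbet))
          intro x hx
          rw [abs_mul]
          have h1 : |bet' (ux x) * ux x| ≤ bet (ux x) :=
            le_trans (abs_bet'_mul_le _) (abs_le_bet _)
          have h2 : |1 - 2 * uu x| ≤ 1 + 2 * M := by
            rw [abs_le]
            have := hub x hx
            constructor <;> nlinarith [this.1, this.2]
          calc |bet' (ux x) * ux x| * |1 - 2 * uu x| ≤ bet (ux x) * (1 + 2 * M) := by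
                apply mul_le_mul h1 h2 (abs_nonneg _) (bet_nonneg _)
            _ = (1 + 2 * M) * bet (ux x) := by ring
      _ = (1 + 2 * M) * Wloc := by rw [intervalIntegral.integral_const_mul]
  -- combine
  have hd1 : δ * (∫ x in (-1:ℝ)..1, bet' (ux x) * uxxx x) ≤ 0 :=
    mul_nonpos_of_nonneg_of_nonpos hδ hI1
  have hr5 : r * (∫ x in (-1:ℝ)..1, bet' (ux x) * ux x * (1 - 2 * uu x))
      ≤ r * ((1 + 2 * M) * Wloc) := by
    apply mul_le_mul_of_nonneg_left _ hr
    exact hI5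
  have hsum : (4 * M / ε + r * (1 + 2 * M)) * Wloc + 4 * M ^ 2 / ε ^ 2
      = M / ε * Wloc + (M / ε * Wloc + M / ε * Wloc) + (4 * M ^ 2 / ε ^ 2 + M / ε * Wloc)
        + r * ((1 + 2 * M) * Wloc) := by ring
  rw [hsum]
  linarith [hI2, hI3, hI4, hd1, hr5]

end Kato

section SolutionFacts

variable {T ε r δ : ℝ} {u₀ : ℝ → ℝ} {u φ : ℝ → ℝ → ℝ}

lemma slice_smooth {F : ℝ → ℝ → ℝ} (hF : ContDiff ℝ (⊤ : ℕ∞) (fun q : ℝ × ℝ => F q.1 q.2)) (t : ℝ) :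
    ContDiff ℝ (⊤:ℕ∞) (F t) := by
  have h : ContDiff ℝ (⊤:ℕ∞) (fun q : ℝ × ℝ => F q.1 q.2) := hF.of_le (by simp)
  exact h.comp (contDiff_const.prodMk contDiff_id)

lemma slice_smooth_t {F : ℝ → ℝ → ℝ} (hF : ContDiff ℝ (⊤ : ℕ∞) (fun q : ℝ × ℝ => F q.1 q.2)) (x : ℝ) :
    ContDiff ℝ (⊤:ℕ∞) (fun s => F s x) := by
  have h : ContDiff ℝ (⊤:ℕ∞) (fun q : ℝ × ℝ => F q.1 q.2) := hF.of_le (by simp)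
  exact h.comp (contDiff_id.prodMk contDiff_const)

/-- Elliptic max principle bounds for `ψ = u t - ε * deriv (φ t)`. -/
lemma elliptic_bounds (sol : IsMonostableSol T ε r δ u₀ u φ) (hε : 0 < ε)
    {t : ℝ} (ht : t ∈ Icc (0:ℝ) T) {xm : ℝ} (hxm : xm ∈ Icc (-1:ℝ) 1)
    (hmax : ∀ x ∈ Icc (-1:ℝ) 1, u t x ≤ u t xm) :
    ∀ y ∈ Icc (-1:ℝ) 1,
      0 ≤ u t y - ε * deriv (φ t) y ∧ u t y - ε * deriv (φ t) y ≤ u t xm := by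
  set ψ : ℝ → ℝ := fun y => u t y - ε * deriv (φ t) y with hψdef
  have hus : ContDiff ℝ (⊤:ℕ∞) (u t) := slice_smooth sol.smooth_u t
  have hφs : ContDiff ℝ (⊤:ℕ∞) (φ t) := slice_smooth sol.smooth_phi t
  have hφ' : ContDiff ℝ (⊤:ℕ∞) (deriv (φ t)) := deriv_smooth_of_smooth hφs
  have hψs : ContDiff ℝ (⊤:ℕ∞) ψ := hus.sub (contDiff_const.mul hφ')
  have hψc : Continuous ψ := hψs.continuous
  have hder : ∀ y, deriv ψ y = deriv (u t) y - ε * deriv (deriv (φ t)) y := by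
    intro y
    have h1 : HasDerivAt (u t) (deriv (u t) y) y :=
      ((hus.differentiable (by simp)) y).hasDerivAt
    have h2 : HasDerivAt (deriv (φ t)) (deriv (deriv (φ t)) y) y :=
      ((hφ'.differentiable (by simp)) y).hasDerivAt
    exact (h1.sub (h2.const_mul ε)).deriv
  have hI1 : ∀ y ∈ Icc (-1:ℝ) 1, deriv ψ y = -φ t y := by
    intro y hy
    have := sol.eq_phi t ht y hy
    rw [hder y]; linarith
  have hφx_eq : ∀ y, deriv (φ t) y = (u t y - ψ y) / ε := by
    intro y; simp only [hψdef]; field_simp; ring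
  have hI2 : ∀ y ∈ Icc (-1:ℝ) 1, deriv (deriv ψ) y = (ψ y - u t y) / ε := by
    apply eq_on_Icc_of_eq_on_Ioo
    · exact (deriv_smooth_of_smooth (deriv_smooth_of_smooth hψs)).continuous
    · exact Continuous.div ((hψs.continuous).sub hus.continuous) continuous_const
        (fun _ => hε.ne')
    · norm_num
    · intro y hy
      have hmem : Icc (-1:ℝ) 1 ∈ nhds y := Icc_mem_nhds hy.1 hy.2
      have heq : deriv ψ =ᶠ[nhds y] (fun z => -φ t z) := by
        filter_upwards [hmem] with z hz using hI1 z hz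
      rw [heq.deriv_eq]
      have h3 : deriv (fun z => -φ t z) y = -deriv (φ t) y := deriv.neg
      rw [h3, hφx_eq y]; ring
  -- zero derivative of ψ at any extremum point of Icc
  have hd0 : ∀ c ∈ Icc (-1:ℝ) 1, (IsLocalExtr ψ c ∨ c = -1 ∨ c = 1) → deriv ψ c = 0 := by
    intro c hc hcase
    rcases hcase with hloc | hb | hb
    · exact hloc.deriv_eq_zero
    · rw [hb]; rw [hI1 (-1) (by norm_num)]; simp [(sol.bc_phi t ht).1]
    · rw [hb]; rw [hI1 1 (by norm_num)]; simp [(sol.bc_phi t ht).2]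
  have hclass : ∀ c ∈ Icc (-1:ℝ) 1, c = -1 ∨ c = 1 ∨ c ∈ Ioo (-1:ℝ) 1 := by
    intro c hc
    rcases eq_or_lt_of_le hc.1 with h1 | h1
    · exact Or.inl h1.symm
    rcases eq_or_lt_of_le hc.2 with h2 | h2
    · exact Or.inr (Or.inl h2)
    · exact Or.inr (Or.inr ⟨h1, h2⟩)
  have hub : ∀ y ∈ Icc (-1:ℝ) 1, ψ y ≤ u t xm := by
    obtain ⟨c, hc, hcmax⟩ := isCompact_Icc.exists_isMaxOn (nonempty_Icc.mpr (by norm_num))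
      (hψc.continuousOn (s := Icc (-1:ℝ) 1))
    intro y hy
    have hyc : ψ y ≤ ψ c := hcmax hy
    by_contra hcon
    push_neg at hcon
    have hgt : u t xm < ψ c := lt_of_lt_of_le hcon hyc
    have hpos2 : 0 < deriv (deriv ψ) c := by
      rw [hI2 c hc]
      apply div_pos _ hε
      have := hmax c hc
      linarith
    have hdc : deriv ψ c = 0 := by
      apply hd0 c hc
      rcases hclass c hc with h | h | h
      · exact Or.inr (Or.inl h)
      · exact Or.inr (Or.inr h)
      · exact Or.inl (IsExtrOn.isLocalExtr (hcmax.isExtr) (Icc_mem_nhds h.1 h.2))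
    have := second_deriv_nonpos_at_max hψs (by norm_num : (-1:ℝ) < 1) hc
      (fun x hx => hcmax hx) hdc
    linarith
  have hlb : ∀ y ∈ Icc (-1:ℝ) 1, 0 ≤ ψ y := by
    obtain ⟨c, hc, hcmin⟩ := isCompact_Icc.exists_isMinOn (nonempty_Icc.mpr (by norm_num))
      (hψc.continuousOn (s := Icc (-1:ℝ) 1))
    intro y hy
    have hyc : ψ c ≤ ψ y := hcmin hy
    by_contra hcon
    push_neg at hcon
    have hlt : ψ c < 0 := lt_of_le_of_lt hyc hcon
    have hneg2 : deriv (deriv ψ) c < 0 := by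
      rw [hI2 c hc]
      apply div_neg_of_neg_of_pos _ hε
      have := sol.nonneg t ht c hc
      linarith
    have hdc : deriv ψ c = 0 := by
      apply hd0 c hc
      rcases hclass c hc with h | h | h
      · exact Or.inr (Or.inl h)
      · exact Or.inr (Or.inr h)
      · exact Or.inl (IsExtrOn.isLocalExtr (hcmin.isExtr) (Icc_mem_nhds h.1 h.2))
    have hnegψ : ContDiff ℝ (⊤:ℕ∞) (fun y => -ψ y) := hψs.neg
    have hdneg : deriv (fun y => -ψ y) c = 0 := by
      rw [deriv.fun_neg, hdc, neg_zero]
    have h2nd := second_deriv_nonpos_at_max hnegψ (by norm_num : (-1:ℝ) < 1) hc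
      (fun x hx => neg_le_neg (hcmin hx)) hdneg
    have heq2 : deriv (deriv (fun y => -ψ y)) c = -deriv (deriv ψ) c := by
      have e1 : deriv (fun y => -ψ y) = fun y => -deriv ψ y := funext (fun y => deriv.neg)
      rw [e1]
      exact deriv.neg
    rw [heq2] at h2nd
    linarith
  exact fun y hy => ⟨hlb y hy, hub y hy⟩

end SolutionFacts

section MaxPrinciple

variable {T ε r δ : ℝ} {u₀ : ℝ → ℝ} {u φ : ℝ → ℝ → ℝ}

/-- Parabolic maximum principle: `u ≤ M₀ e^{(r+1)t}`. -/
lemma max_principle (sol : IsMonostableSol T ε r δ u₀ u φ)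
    (hT : 0 < T) (hε : 0 < ε) (hr : 0 ≤ r) (hδ : 0 ≤ δ)
    (hpos : ∀ t ∈ Icc (0:ℝ) T, ∀ x ∈ Icc (-1:ℝ) 1, 0 < u t x)
    {M₀ : ℝ} (hM₀ : ∀ x ∈ Icc (-1:ℝ) 1, u₀ x ≤ M₀) :
    ∀ t ∈ Icc (0:ℝ) T, ∀ x ∈ Icc (-1:ℝ) 1, u t x ≤ M₀ * Real.exp ((r+1)*t) := by
  set α : ℝ := r + 1 with hα
  have hαpos : 0 < α := by positivity
  have hUsmooth : ContDiff ℝ (⊤:ℕ∞) (fun q : ℝ × ℝ => u q.1 q.2) := sol.smooth_u.of_le (by simp)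
  have hucont : Continuous (fun q : ℝ × ℝ => u q.1 q.2) := hUsmooth.continuous
  have key : ∀ σ > (0:ℝ), ∀ t ∈ Icc (0:ℝ) T, ∀ x ∈ Icc (-1:ℝ) 1,
      u t x * Real.exp (-α * t) < M₀ + σ := by
    intro σ hσ
    by_contra hcon
    push_neg at hcon
    obtain ⟨tb, htb, xb, hxb, hbad⟩ := hcon
    set c : ℝ := M₀ + σ with hc
    set g : ℝ × ℝ → ℝ := fun p => u p.1 p.2 * Real.exp (-α * p.1) with hg
    have hgcont : Continuous g := by
      apply hucont.mul
      exact (Real.continuous_exp.comp (continuous_const.mul continuous_fst))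
    set K : Set (ℝ × ℝ) := (Icc (0:ℝ) T ×ˢ Icc (-1:ℝ) 1) ∩ {p | c ≤ g p} with hK
    have hKcomp : IsCompact K :=
      (isCompact_Icc.prod isCompact_Icc).inter_right (isClosed_le continuous_const hgcont)
    have hKne : K.Nonempty := ⟨(tb, xb), ⟨⟨htb, hxb⟩, hbad⟩⟩
    set S : Set ℝ := Prod.fst '' K with hS
    have hScomp : IsCompact S := hKcomp.image continuous_fst
    have hSne : S.Nonempty := hKne.image _
    set t₀ : ℝ := sInf S with ht₀
    have ht₀S : t₀ ∈ S := hScomp.sInf_mem hSne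
    obtain ⟨⟨s₁, y₁⟩, hp₀K, hp₀1⟩ := ht₀S
    simp only at hp₀1
    subst hp₀1
    have ht₀Icc : t₀ ∈ Icc (0:ℝ) T := hp₀K.1.1
    have hy₁ : y₁ ∈ Icc (-1:ℝ) 1 := hp₀K.1.2
    have hgy₁ : c ≤ u t₀ y₁ * Real.exp (-α * t₀) := hp₀K.2
    have ht₀pos : 0 < t₀ := by
      rcases lt_or_eq_of_le ht₀Icc.1 with h | h
      · exact h
      · exfalso
        have h0 : u 0 y₁ = u₀ y₁ := sol.init y₁ hy₁
        have hM : u₀ y₁ ≤ M₀ := hM₀ y₁ hy₁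
        rw [← h] at hgy₁
        simp only [mul_zero, neg_zero, Real.exp_zero, mul_one] at hgy₁
        rw [h0] at hgy₁
        linarith
    -- spatial max point of u t₀
    obtain ⟨x₀, hx₀, hx₀max⟩ := isCompact_Icc.exists_isMaxOn
      (nonempty_Icc.mpr (by norm_num : (-1:ℝ) ≤ 1))
      ((slice_smooth sol.smooth_u t₀).continuous.continuousOn)
    have hx₀max' : ∀ x ∈ Icc (-1:ℝ) 1, u t₀ x ≤ u t₀ x₀ := fun x hx => hx₀max hx
    have hgx₀ : c ≤ u t₀ x₀ * Real.exp (-α * t₀) := by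
      refine le_trans hgy₁ ?_
      exact mul_le_mul_of_nonneg_right (hx₀max' y₁ hy₁) (Real.exp_pos _).le
    -- the function f s = u s x₀ * exp (-α s) has a left-max at t₀
    set f : ℝ → ℝ := fun s => u s x₀ * Real.exp (-α * s) with hf
    have hfmax : ∀ s ∈ Icc (0:ℝ) t₀, f s ≤ f t₀ := by
      intro s hs
      rcases lt_or_eq_of_le hs.2 with hlt | heq
      · have hsnotS : s ∉ S := fun hmem => absurd (csInf_le hScomp.bddBelow hmem) (not_le.mpr hlt)
        have hsIcc : s ∈ Icc (0:ℝ) T := ⟨hs.1, le_trans hs.2 ht₀Icc.2⟩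
        have : (s, x₀) ∉ K := fun hmem => hsnotS ⟨(s, x₀), hmem, rfl⟩
        have hnot : ¬ (c ≤ g (s, x₀)) := fun hge => this ⟨⟨hsIcc, hx₀⟩, hge⟩
        push_neg at hnot
        calc f s = g (s, x₀) := rfl
          _ ≤ c := hnot.le
          _ ≤ u t₀ x₀ * Real.exp (-α * t₀) := hgx₀
          _ = f t₀ := rfl
      · rw [heq]
    -- derivative of f at t₀
    have hu1 : HasDerivAt (fun s => u s x₀) (P1 (fun q : ℝ × ℝ => u q.1 q.2) (t₀, x₀)) t₀ :=
      hasDerivAt_P1slice hUsmooth t₀ x₀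
    have he1 : HasDerivAt (fun s : ℝ => Real.exp (-α * s)) (Real.exp (-α * t₀) * (-α)) t₀ := by
      have h2 : HasDerivAt (fun s : ℝ => -α * s) (-α) t₀ := by
        simpa using (hasDerivAt_id t₀).const_mul (-α)
      exact h2.exp
    have hfd : HasDerivAt f
        (P1 (fun q : ℝ × ℝ => u q.1 q.2) (t₀, x₀) * Real.exp (-α * t₀)
          + u t₀ x₀ * (Real.exp (-α * t₀) * (-α))) t₀ := hu1.mul he1
    have hderiv_nonneg : 0 ≤ deriv f t₀ :=
      deriv_nonneg_of_left_max ht₀pos hfd.differentiableAt hfmax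
    rw [hfd.deriv] at hderiv_nonneg
    -- now compute: the time derivative of u equals RHS of the PDE
    have hUT : P1 (fun q : ℝ × ℝ => u q.1 q.2) (t₀, x₀) = deriv (fun s => u s x₀) t₀ :=
      (hasDerivAt_P1slice hUsmooth t₀ x₀).deriv.symm
    have heq_u := sol.eq_u t₀ ht₀Icc x₀ hx₀
    -- spatial first derivative vanishes at the max
    have hux0 : deriv (u t₀) x₀ = 0 := by
      rcases (by
        rcases eq_or_lt_of_le hx₀.1 with h1 | h1
        · exact Or.inl h1.symm
        rcases eq_or_lt_of_le hx₀.2 with h2 | h2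
        · exact Or.inr (Or.inl h2)
        · exact Or.inr (Or.inr (⟨h1, h2⟩ : x₀ ∈ Ioo (-1:ℝ) 1)) :
          x₀ = -1 ∨ x₀ = 1 ∨ x₀ ∈ Ioo (-1:ℝ) 1) with h | h | h
      · rw [h]; exact (sol.bc_u t₀ ht₀Icc).1
      · rw [h]; exact (sol.bc_u t₀ ht₀Icc).2
      · exact (IsExtrOn.isLocalExtr hx₀max.isExtr (Icc_mem_nhds h.1 h.2)).deriv_eq_zero
    -- second derivative nonpositive
    have huxx : deriv (deriv (u t₀)) x₀ ≤ 0 :=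
      second_deriv_nonpos_at_max (slice_smooth sol.smooth_u t₀) (by norm_num : (-1:ℝ) < 1)
        hx₀ hx₀max' hux0
    -- transport term at the max
    have hφs : ContDiff ℝ (⊤:ℕ∞) (φ t₀) := slice_smooth sol.smooth_phi t₀
    have hPx : deriv (fun y => u t₀ y * φ t₀ y) x₀ = u t₀ x₀ * deriv (φ t₀) x₀ := by
      have h1 : HasDerivAt (u t₀) (deriv (u t₀) x₀) x₀ :=
        (((slice_smooth sol.smooth_u t₀).differentiable (by simp)) x₀).hasDerivAt
      have h2 : HasDerivAt (φ t₀) (deriv (φ t₀) x₀) x₀ :=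
        ((hφs.differentiable (by simp)) x₀).hasDerivAt
      rw [(h1.fun_mul h2).deriv, hux0]
      ring
    -- sign of φ_x at the max, via the elliptic bounds
    have hell := elliptic_bounds sol hε ht₀Icc hx₀ hx₀max'
    have hφx_nonneg : 0 ≤ deriv (φ t₀) x₀ := by
      have h1 := (hell x₀ hx₀).2
      have h2 : 0 ≤ ε * deriv (φ t₀) x₀ := by linarith
      exact nonneg_of_mul_nonneg_right h2 hε
    have hu_pos : 0 < u t₀ x₀ := hpos t₀ ht₀Icc x₀ hx₀
    -- conclude the contradiction
    have hUTle : deriv (fun s => u s x₀) t₀ ≤ r * u t₀ x₀ := by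
      rw [heq_u, hPx]
      have h1 : δ * deriv (deriv (u t₀)) x₀ ≤ 0 := mul_nonpos_of_nonneg_of_nonpos hδ huxx
      have h2 : 0 ≤ u t₀ x₀ * deriv (φ t₀) x₀ := mul_nonneg hu_pos.le hφx_nonneg
      have h3 : r * u t₀ x₀ * (1 - u t₀ x₀) ≤ r * u t₀ x₀ := by
        nlinarith [mul_nonneg hr hu_pos.le, sq_nonneg (u t₀ x₀)]
      linarith
    have hfinal : P1 (fun q : ℝ × ℝ => u q.1 q.2) (t₀, x₀) * Real.exp (-α * t₀)
        + u t₀ x₀ * (Real.exp (-α * t₀) * (-α)) < 0 := by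
      rw [hUT]
      have hexp : 0 < Real.exp (-α * t₀) := Real.exp_pos _
      have : deriv (fun s => u s x₀) t₀ - α * u t₀ x₀ ≤ r * u t₀ x₀ - α * u t₀ x₀ := by
        linarith
      have h5 : deriv (fun s => u s x₀) t₀ - α * u t₀ x₀ < 0 := by
        rw [hα] at *
        nlinarith
      nlinarith
    linarith
  -- remove the margin
  intro t ht x hx
  have h1 : u t x * Real.exp (-α * t) ≤ M₀ := by
    refine le_of_forall_pos_lt_add ?_
    intro σ hσ
    exact key σ hσ t ht x hx
  have hexp : 0 < Real.exp (-α * t) := Real.exp_pos _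
  have h2 : u t x = (u t x * Real.exp (-α * t)) * Real.exp (α * t) := by
    rw [mul_assoc, ← Real.exp_add]
    simp
  rw [h2, hα]
  calc (u t x * Real.exp (-α * t)) * Real.exp (α * t)
      ≤ M₀ * Real.exp (α * t) := by
        apply mul_le_mul_of_nonneg_right h1 (Real.exp_pos _).le
    _ = M₀ * Real.exp ((r+1) * t) := by rw [hα]

end MaxPrinciple

section PhiBounds

variable {T ε r δ : ℝ} {u₀ : ℝ → ℝ} {u φ : ℝ → ℝ → ℝ}

lemma phixx_eq (sol : IsMonostableSol T ε r δ u₀ u φ) (hε : 0 < ε)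
    {t : ℝ} (ht : t ∈ Icc (0:ℝ) T) {y : ℝ} (hy : y ∈ Icc (-1:ℝ) 1) :
    deriv (deriv (φ t)) y = (φ t y + deriv (u t) y) / ε := by
  have := sol.eq_phi t ht y hy
  field_simp
  linarith

lemma phi_bounds (sol : IsMonostableSol T ε r δ u₀ u φ) (hε : 0 < ε)
    {t : ℝ} (ht : t ∈ Icc (0:ℝ) T) {M : ℝ}
    (hM : ∀ x ∈ Icc (-1:ℝ) 1, u t x ≤ M) :
    (∀ y ∈ Icc (-1:ℝ) 1, |deriv (φ t) y| ≤ M / ε) ∧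
      (∀ y ∈ Icc (-1:ℝ) 1, |φ t y| ≤ 2 * M / ε) := by
  obtain ⟨xm, hxm, hxmmax⟩ := isCompact_Icc.exists_isMaxOn
    (nonempty_Icc.mpr (by norm_num : (-1:ℝ) ≤ 1))
    ((slice_smooth sol.smooth_u t).continuous.continuousOn)
  have hxmmax' : ∀ x ∈ Icc (-1:ℝ) 1, u t x ≤ u t xm := fun x hx => hxmmax hx
  have hell := elliptic_bounds sol hε ht hxm hxmmax'
  have hMxm : u t xm ≤ M := hM xm hxm
  have huM : ∀ y ∈ Icc (-1:ℝ) 1, 0 ≤ u t y ∧ u t y ≤ M := fun y hy =>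
    ⟨sol.nonneg t ht y hy, hM y hy⟩
  -- bound (a)
  have ha : ∀ y ∈ Icc (-1:ℝ) 1, |deriv (φ t) y| ≤ M / ε := by
    intro y hy
    have h1 := (hell y hy).1
    have h2 := (hell y hy).2
    have h3 := huM y hy
    have h0xm : 0 ≤ u t xm := sol.nonneg t ht xm hxm
    rw [abs_le]
    constructor
    · rw [show -(M/ε) = (-M)/ε by ring, div_le_iff₀ hε]
      nlinarith
    · rw [le_div_iff₀ hε]
      nlinarith
  refine ⟨ha, ?_⟩
  -- ψ and its derivative identities
  set ψ : ℝ → ℝ := fun y => u t y - ε * deriv (φ t) y with hψdef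
  have hus : ContDiff ℝ (⊤:ℕ∞) (u t) := slice_smooth sol.smooth_u t
  have hφs : ContDiff ℝ (⊤:ℕ∞) (φ t) := slice_smooth sol.smooth_phi t
  have hφ' : ContDiff ℝ (⊤:ℕ∞) (deriv (φ t)) := deriv_smooth_of_smooth hφs
  have hψs : ContDiff ℝ (⊤:ℕ∞) ψ := hus.sub (contDiff_const.mul hφ')
  have hder : ∀ y, deriv ψ y = deriv (u t) y - ε * deriv (deriv (φ t)) y := by
    intro y
    have h1 : HasDerivAt (u t) (deriv (u t) y) y :=
      ((hus.differentiable (by simp)) y).hasDerivAt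
    have h2 : HasDerivAt (deriv (φ t)) (deriv (deriv (φ t)) y) y :=
      ((hφ'.differentiable (by simp)) y).hasDerivAt
    exact (h1.sub (h2.const_mul ε)).deriv
  have hI1 : ∀ y ∈ Icc (-1:ℝ) 1, deriv ψ y = -φ t y := by
    intro y hy
    have := sol.eq_phi t ht y hy
    rw [hder y]; linarith
  have hI2 : ∀ y ∈ Icc (-1:ℝ) 1, deriv (deriv ψ) y = (ψ y - u t y) / ε := by
    apply eq_on_Icc_of_eq_on_Ioo
    · exact (deriv_smooth_of_smooth (deriv_smooth_of_smooth hψs)).continuous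
    · exact Continuous.div ((hψs.continuous).sub hus.continuous) continuous_const
        (fun _ => hε.ne')
    · norm_num
    · intro y hy
      have hmem : Icc (-1:ℝ) 1 ∈ nhds y := Icc_mem_nhds hy.1 hy.2
      have heq : deriv ψ =ᶠ[nhds y] (fun z => -φ t z) := by
        filter_upwards [hmem] with z hz using hI1 z hz
      rw [heq.deriv_eq]
      have h3 : deriv (fun z => -φ t z) y = -deriv (φ t) y := deriv.neg
      rw [h3]
      simp only [hψdef]
      field_simp
      ring
  -- FTC bound on deriv ψ
  intro y hy
  have hftc : ∫ x in (-1:ℝ)..y, deriv (deriv ψ) x = deriv ψ y - deriv ψ (-1) := by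
    apply intervalIntegral.integral_deriv_eq_sub
    · intro x hx
      exact ((deriv_smooth_of_smooth hψs).differentiable (by simp) x)
    · exact ((deriv_smooth_of_smooth (deriv_smooth_of_smooth hψs)).continuous).intervalIntegrable _ _
  have hbc : deriv ψ (-1) = 0 := by
    rw [hI1 (-1) (by norm_num)]
    simp [(sol.bc_phi t ht).1]
  have hbound : ∀ x ∈ Set.uIoc (-1:ℝ) y, ‖deriv (deriv ψ) x‖ ≤ M / ε := by
    intro x hx
    have hxIcc : x ∈ Icc (-1:ℝ) 1 := by
      rw [uIoc_of_le hy.1] at hx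
      exact ⟨hx.1.le, hx.2.trans hy.2⟩
    rw [hI2 x hxIcc]
    have h1 := (hell x hxIcc).1
    have h2 := (hell x hxIcc).2
    have h3 := huM x hxIcc
    rw [Real.norm_eq_abs, abs_div, abs_of_pos hε]
    gcongr
    rw [abs_le]
    constructor <;> simp only [hψdef] <;> nlinarith
  have hest := intervalIntegral.norm_integral_le_of_norm_le_const hbound
  rw [hftc, hbc, sub_zero] at hest
  have hφy : |φ t y| = ‖deriv ψ y‖ := by
    rw [hI1 y hy, Real.norm_eq_abs, abs_neg]
  rw [hφy]
  calc ‖deriv ψ y‖ ≤ M / ε * |y - (-1)| := hest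
    _ ≤ M / ε * 2 := by
        apply mul_le_mul_of_nonneg_left _ _
        · rw [abs_le]; constructor <;> [linarith [hy.1]; linarith [hy.2]]
        · have h0 : 0 ≤ u t xm := sol.nonneg t ht xm hxm
          have : 0 ≤ M := le_trans h0 hMxm
          positivity
    _ = 2 * M / ε := by ring

end PhiBounds

section BVMain

variable {T ε r δ : ℝ} {u₀ : ℝ → ℝ} {u φ : ℝ → ℝ → ℝ}

lemma bv_main (sol : IsMonostableSol T ε r δ u₀ u φ) (hT : 0 < T) (hε : 0 < ε) (hr : 0 ≤ r)
    (hδ : 0 < δ) {M : ℝ} (hM1 : 1 ≤ M)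
    (hM : ∀ t ∈ Icc (0:ℝ) T, ∀ x ∈ Icc (-1:ℝ) 1, u t x ≤ M) :
    ∀ t ∈ Icc (0:ℝ) T,
      (∫ x in (-1:ℝ)..1, bet (deriv (u t) x)) ≤
        ((∫ x in (-1:ℝ)..1, bet (deriv (u 0) x)) + (4*M^2/ε^2) / (4*M/ε + r*(1+2*M) + 1))
          * Real.exp ((4*M/ε + r*(1+2*M) + 1) * T) := by
  have hMpos : (0:ℝ) < M := lt_of_lt_of_le one_pos hM1
  set Kc : ℝ := 4*M/ε + r*(1+2*M) + 1 with hKc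
  set Lc : ℝ := 4*M^2/ε^2 with hLc
  have hKpos : 0 < Kc := by
    have h1 : 0 < 4*M/ε := by positivity
    have h2 : 0 ≤ r*(1+2*M) := by positivity
    rw [hKc]; linarith
  have hLpos : 0 ≤ Lc := by positivity
  set F₀ : ℝ × ℝ → ℝ := fun q => u q.1 q.2 with hF₀
  have hUs : ContDiff ℝ (⊤:ℕ∞) F₀ := sol.smooth_u.of_le (by simp)
  have hUXs : ContDiff ℝ (⊤:ℕ∞) (P2 F₀) := contDiff_P2 hUs
  have hUXTs : ContDiff ℝ (⊤:ℕ∞) (P1 (P2 F₀)) := contDiff_P1 hUXs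
  have hF₀slice : ∀ t : ℝ, (fun y => F₀ (t, y)) = u t := fun _ => rfl
  have hux : ∀ t x : ℝ, deriv (u t) x = P2 F₀ (t, x) := by
    intro t x
    rw [← hF₀slice t]
    exact (hasDerivAt_P2slice hUs t x).deriv
  set W : ℝ → ℝ := fun s => ∫ x in (-1:ℝ)..1, bet (P2 F₀ (s, x)) with hW
  have hWt : ∀ t, W t = ∫ x in (-1:ℝ)..1, bet (deriv (u t) x) := by
    intro t
    apply intervalIntegral.integral_congr
    intro x _
    show bet (P2 F₀ (t, x)) = bet (deriv (u t) x)
    rw [hux t x]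
  have hWnonneg : ∀ t, 0 ≤ W t := by
    intro t
    apply intervalIntegral.integral_nonneg (by norm_num)
    intro x _
    exact bet_nonneg _
  -- Step A : derivative of W
  have hWderiv : ∀ t : ℝ, HasDerivAt W
      (∫ x in (-1:ℝ)..1, bet' (P2 F₀ (t, x)) * P1 (P2 F₀) (t, x)) t := by
    intro t
    have hcont : Continuous (fun q : ℝ × ℝ => bet' (P2 F₀ q) * P1 (P2 F₀) q) :=
      ((continuous_bet'.comp hUXs.continuous).mul hUXTs.continuous)
    obtain ⟨C, hC⟩ := (isCompact_Icc.prod (isCompact_Icc (a := (-1:ℝ)) (b := 1))).exists_bound_of_continuousOn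
      (s := Icc (t-1) (t+1) ×ˢ Icc (-1:ℝ) 1) hcont.continuousOn
    have key := intervalIntegral.hasDerivAt_integral_of_dominated_loc_of_deriv_le
      (F := fun s x => bet (P2 F₀ (s, x)))
      (F' := fun s x => bet' (P2 F₀ (s, x)) * P1 (P2 F₀) (s, x))
      (x₀ := t) (a := (-1:ℝ)) (b := 1) (bound := fun _ => C) (μ := MeasureTheory.volume) (s := Metric.ball t 1) (Metric.ball_mem_nhds t one_pos)
      ?_ ?_ ?_ ?_ ?_ ?_
    · exact key.2
    · -- measurability of F x near t
      filter_upwards with s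
      exact ((continuous_bet.comp (hUXs.continuous.comp
        (continuous_const.prodMk continuous_id))).aestronglyMeasurable)
    · exact ((continuous_bet.comp (hUXs.continuous.comp
        (continuous_const.prodMk continuous_id))).intervalIntegrable _ _)
    · exact ((hcont.comp (continuous_const.prodMk continuous_id)).aestronglyMeasurable)
    · -- bound
      apply MeasureTheory.ae_of_all
      intro x hx s hs
      have hxIcc : x ∈ Icc (-1:ℝ) 1 := by
        rw [uIoc_of_le (by norm_num : (-1:ℝ) ≤ 1)] at hx
        exact ⟨hx.1.le, hx.2⟩
      have hsIcc : s ∈ Icc (t-1) (t+1) := by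
        have := Metric.mem_ball.mp hs
        rw [Real.dist_eq] at this
        rw [abs_lt] at this
        constructor <;> linarith [this.1, this.2]
      exact hC (s, x) ⟨hsIcc, hxIcc⟩
    · exact intervalIntegrable_const
    · -- differentiability in s
      apply MeasureTheory.ae_of_all
      intro x _ s _
      have h1 : HasDerivAt (fun s => P2 F₀ (s, x)) (P1 (P2 F₀) (s, x)) s :=
        hasDerivAt_P1slice hUXs s x
      exact (hasDerivAt_bet _).comp s h1
  -- Step B : differential inequality
  have hstepB : ∀ t ∈ Icc (0:ℝ) T,
      (∫ x in (-1:ℝ)..1, bet' (P2 F₀ (t, x)) * P1 (P2 F₀) (t, x)) ≤ Kc * W t + Lc := by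
    intro t ht
    have hus : ContDiff ℝ (⊤:ℕ∞) (u t) := slice_smooth sol.smooth_u t
    have huxs : ContDiff ℝ (⊤:ℕ∞) (deriv (u t)) := deriv_smooth_of_smooth hus
    have huxxs : ContDiff ℝ (⊤:ℕ∞) (deriv (deriv (u t))) := deriv_smooth_of_smooth huxs
    have huxxxs : ContDiff ℝ (⊤:ℕ∞) (deriv (deriv (deriv (u t)))) := deriv_smooth_of_smooth huxxs
    have hφs : ContDiff ℝ (⊤:ℕ∞) (φ t) := slice_smooth sol.smooth_phi t
    have hφxs : ContDiff ℝ (⊤:ℕ∞) (deriv (φ t)) := deriv_smooth_of_smooth hφs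
    have hφxxs : ContDiff ℝ (⊤:ℕ∞) (deriv (deriv (φ t))) := deriv_smooth_of_smooth hφxs
    have hD1 : ∀ x, HasDerivAt (u t) (deriv (u t) x) x := fun x =>
      ((hus.differentiable (by simp)) x).hasDerivAt
    have hD2 : ∀ x, HasDerivAt (deriv (u t)) (deriv (deriv (u t)) x) x := fun x =>
      ((huxs.differentiable (by simp)) x).hasDerivAt
    have hD3 : ∀ x, HasDerivAt (deriv (deriv (u t))) (deriv (deriv (deriv (u t))) x) x := fun x =>
      ((huxxs.differentiable (by simp)) x).hasDerivAt
    have hE1 : ∀ x, HasDerivAt (φ t) (deriv (φ t) x) x := fun x =>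
      ((hφs.differentiable (by simp)) x).hasDerivAt
    have hE2 : ∀ x, HasDerivAt (deriv (φ t)) (deriv (deriv (φ t)) x) x := fun x =>
      ((hφxs.differentiable (by simp)) x).hasDerivAt
    -- identification of the integrand on the interior
    have hGeq : ∀ x ∈ Ioo (-1:ℝ) 1, bet' (P2 F₀ (t, x)) * P1 (P2 F₀) (t, x)
        = δ * (bet' (deriv (u t) x) * deriv (deriv (deriv (u t))) x)
          - φ t x * (bet' (deriv (u t) x) * deriv (deriv (u t)) x)
          - 2 * (bet' (deriv (u t) x) * deriv (u t) x * deriv (φ t) x)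
          - bet' (deriv (u t) x) * u t x * deriv (deriv (φ t)) x
          + r * (bet' (deriv (u t) x) * deriv (u t) x * (1 - 2 * u t x)) := by
      intro x hx
      have e1 : P1 (P2 F₀) (t, x) = P2 (P1 F₀) (t, x) := P1_P2_symm hUs (t, x)
      have e2 : P2 (P1 F₀) (t, x) = deriv (fun y => P1 F₀ (t, y)) x :=
        (hasDerivAt_P2slice (contDiff_P1 hUs) t x).deriv.symm
      have hagree : ∀ y ∈ Icc (-1:ℝ) 1, P1 F₀ (t, y)
          = δ * deriv (deriv (u t)) y - deriv (fun z => u t z * φ t z) y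
            + r * u t y * (1 - u t y) := by
        intro y hy
        have h1 : P1 F₀ (t, y) = deriv (fun s => u s y) t :=
          (hasDerivAt_P1slice hUs t y).deriv.symm
        rw [h1]
        exact sol.eq_u t ht y hy
      have e3 : deriv (fun y => P1 F₀ (t, y)) x
          = deriv (fun y => δ * deriv (deriv (u t)) y - deriv (fun z => u t z * φ t z) y
              + r * u t y * (1 - u t y)) x := by
        apply Filter.EventuallyEq.deriv_eq
        filter_upwards [Icc_mem_nhds hx.1 hx.2] with z hz using hagree z hz
      have hPxeq : deriv (fun z => u t z * φ t z)
          = fun z => deriv (u t) z * φ t z + u t z * deriv (φ t) z := by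
        funext z
        exact ((hD1 z).mul (hE1 z)).deriv
      have hRd : HasDerivAt (fun y => δ * deriv (deriv (u t)) y
            - deriv (fun z => u t z * φ t z) y + r * u t y * (1 - u t y))
          (δ * deriv (deriv (deriv (u t))) x
            - (deriv (deriv (u t)) x * φ t x + deriv (u t) x * deriv (φ t) x
              + (deriv (u t) x * deriv (φ t) x + u t x * deriv (deriv (φ t)) x))
            + (r * deriv (u t) x * (1 - u t x) + r * u t x * (-deriv (u t) x))) x := by
        rw [hPxeq]
        apply HasDerivAt.add
        · apply HasDerivAt.sub
          · exact (hD3 x).const_mul δ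
          · exact ((hD2 x).mul (hE1 x)).add ((hD1 x).mul (hE2 x))
        · have ha : HasDerivAt (fun y => r * u t y) (r * deriv (u t) x) x := (hD1 x).const_mul r
          have hb : HasDerivAt (fun y => 1 - u t y) (-deriv (u t) x) x := (hD1 x).const_sub 1
          have hab := ha.mul hb
          have hre : (fun y => r * u t y * (1 - u t y))
              = fun y => (fun y => r * u t y) y * (fun y => 1 - u t y) y := rfl
          rw [hre]
          exact hab
      rw [← hux t x, e1, e2, e3, hRd.deriv]
      ring
    have hIeq : (∫ x in (-1:ℝ)..1, bet' (P2 F₀ (t, x)) * P1 (P2 F₀) (t, x))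
        = ∫ x in (-1:ℝ)..1, (δ * (bet' (deriv (u t) x) * deriv (deriv (deriv (u t))) x)
          - φ t x * (bet' (deriv (u t) x) * deriv (deriv (u t)) x)
          - 2 * (bet' (deriv (u t) x) * deriv (u t) x * deriv (φ t) x)
          - bet' (deriv (u t) x) * u t x * deriv (deriv (φ t)) x
          + r * (bet' (deriv (u t) x) * deriv (u t) x * (1 - 2 * u t x))) := by
      apply intervalIntegral.integral_congr_ae
      have hone : ∀ᵐ (x:ℝ), x ≠ 1 := by
        rw [MeasureTheory.ae_iff]
        have hset : {x : ℝ | ¬ x ≠ 1} = {1} := by ext z; simp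
        rw [hset]
        exact measure_singleton 1
      filter_upwards [hone] with x hx1 hxI
      rw [uIoc_of_le (by norm_num : (-1:ℝ) ≤ 1)] at hxI
      exact hGeq x ⟨hxI.1, lt_of_le_of_ne hxI.2 hx1⟩
    rw [hIeq]
    -- bounds for the Kato estimate
    have hφb := phi_bounds sol hε ht (hM t ht)
    have hub : ∀ y ∈ Icc (-1:ℝ) 1, 0 ≤ u t y ∧ u t y ≤ M := fun y hy =>
      ⟨sol.nonneg t ht y hy, hM t ht y hy⟩
    have hφxxb : ∀ y ∈ Icc (-1:ℝ) 1,
        |deriv (deriv (φ t)) y| ≤ (2 * M / ε + bet (deriv (u t) y)) / ε := by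
      intro y hy
      rw [phixx_eq sol hε ht hy, abs_div, abs_of_pos hε]
      gcongr
      calc |φ t y + deriv (u t) y| ≤ |φ t y| + |deriv (u t) y| := abs_add_le _ _
        _ ≤ 2 * M / ε + bet (deriv (u t) y) := by
            have h1 := hφb.2 y hy
            have h2 := abs_le_bet (deriv (u t) y)
            linarith
    have hkato := kato_estimate δ r ε M (u t) (deriv (u t)) (deriv (deriv (u t)))
      (deriv (deriv (deriv (u t)))) (φ t) (deriv (φ t)) (deriv (deriv (φ t)))
      hD2 hD3 hE1 hus.continuous huxxxs.continuous hφxs.continuous hφxxs.continuous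
      (sol.bc_u t ht).1 (sol.bc_u t ht).2 (sol.bc_phi t ht).1 (sol.bc_phi t ht).2
      hδ.le hr hε hMpos hφb.1 hφb.2 hub hφxxb
    refine le_trans hkato ?_
    rw [hWt t]
    have hW0 : 0 ≤ ∫ x in (-1:ℝ)..1, bet (deriv (u t) x) := by
      rw [← hWt t]; exact hWnonneg t
    have hid : Kc * (∫ x in (-1:ℝ)..1, bet (deriv (u t) x))
        = (4 * M / ε + r * (1 + 2 * M)) * (∫ x in (-1:ℝ)..1, bet (deriv (u t) x))
          + (∫ x in (-1:ℝ)..1, bet (deriv (u t) x)) := by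
      rw [hKc]; ring
    rw [hid, hLc]
    linarith
  -- Step C : Gronwall
  have hWdiff : Differentiable ℝ W := fun s => (hWderiv s).differentiableAt
  have hexpd : ∀ s : ℝ, HasDerivAt (fun s : ℝ => Real.exp (-Kc * s))
      (Real.exp (-Kc * s) * (-Kc)) s := by
    intro s
    have h2 : HasDerivAt (fun s : ℝ => -Kc * s) (-Kc) s := by
      simpa using (hasDerivAt_id s).const_mul (-Kc)
    exact h2.exp
  have hfd : ∀ s : ℝ, HasDerivAt (fun s => (W s + Lc / Kc) * Real.exp (-Kc * s))
      ((∫ x in (-1:ℝ)..1, bet' (P2 F₀ (s, x)) * P1 (P2 F₀) (s, x)) * Real.exp (-Kc * s)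
        + (W s + Lc / Kc) * (Real.exp (-Kc * s) * (-Kc))) s := fun s =>
    (((hWderiv s).add_const (Lc / Kc)).mul (hexpd s))
  have hanti : AntitoneOn (fun s => (W s + Lc / Kc) * Real.exp (-Kc * s)) (Icc (0:ℝ) T) := by
    apply antitoneOn_of_deriv_nonpos (convex_Icc (0:ℝ) T)
    · apply Continuous.continuousOn
      exact (hWdiff.continuous.add continuous_const).mul
        (Real.continuous_exp.comp (continuous_const.mul continuous_id))
    · intro s hs
      exact (hfd s).differentiableAt.differentiableWithinAt
    · intro s hs
      rw [interior_Icc] at hs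
      rw [(hfd s).deriv]
      have hB := hstepB s ⟨hs.1.le, hs.2.le⟩
      have hexp : 0 < Real.exp (-Kc * s) := Real.exp_pos _
      have hWs := hWnonneg s
      have hLK : 0 ≤ Lc / Kc := div_nonneg hLpos hKpos.le
      have hkey : (∫ x in (-1:ℝ)..1, bet' (P2 F₀ (s, x)) * P1 (P2 F₀) (s, x))
          - Kc * W s - Lc ≤ 0 := by linarith
      have hLcc : Lc / Kc * Kc = Lc := div_mul_cancel₀ Lc hKpos.ne'
      generalize hDD : (∫ x in (-1:ℝ)..1, bet' (P2 F₀ (s, x)) * P1 (P2 F₀) (s, x)) = DD at hkey ⊢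
      have hexpand : DD * Real.exp (-Kc * s) + (W s + Lc / Kc) * (Real.exp (-Kc * s) * -Kc)
          = (DD - Kc * W s - Lc / Kc * Kc) * Real.exp (-Kc * s) := by ring
      rw [hexpand, hLcc]
      exact mul_nonpos_of_nonpos_of_nonneg hkey hexp.le
  -- conclude
  intro t ht
  have h1 := hanti (show (0:ℝ) ∈ Icc (0:ℝ) T from ⟨le_refl 0, hT.le⟩) ht ht.1
  simp only at h1
  have h2 := mul_le_mul_of_nonneg_right h1 (Real.exp_pos (Kc * t)).le
  rw [mul_assoc, ← Real.exp_add, show -Kc * t + Kc * t = 0 by ring, Real.exp_zero, mul_one] at h2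
  rw [mul_assoc, ← Real.exp_add, show -Kc * 0 + Kc * t = Kc * t by ring] at h2
  have h3 : Real.exp (Kc * t) ≤ Real.exp (Kc * T) :=
    Real.exp_le_exp.mpr (mul_le_mul_of_nonneg_left ht.2 hKpos.le)
  have h4 : 0 ≤ W 0 + Lc / Kc := add_nonneg (hWnonneg 0) (div_nonneg hLpos hKpos.le)
  have h5 : (W 0 + Lc / Kc) * Real.exp (Kc * t) ≤ (W 0 + Lc / Kc) * Real.exp (Kc * T) :=
    mul_le_mul_of_nonneg_left h3 h4
  have h6 : 0 ≤ Lc / Kc := div_nonneg hLpos hKpos.le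
  have hgoal : W t ≤ (W 0 + Lc / Kc) * Real.exp (Kc * T) := by linarith
  rw [hWt t, hWt 0] at hgoal
  exact hgoal

end BVMain

theorem ux_L1_bound_monostable (T ε r : ℝ) (u₀ : ℝ → ℝ)
    (hT : 0 < T) (hε : 0 < ε) (hr : 0 ≤ r)
    (hu₀ : ContDiff ℝ (⊤ : ℕ∞) u₀) (hu₀nonneg : ∀ x ∈ Set.Icc (-1:ℝ) 1, 0 ≤ u₀ x) :
    ∃ C₁₀ > (0:ℝ), ∀ δ ∈ Set.Ioo (0:ℝ) 1, ∀ u φ : ℝ → ℝ → ℝ, IsMonostableSol T ε r δ u₀ u φ →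
      (∀ t ∈ Set.Icc (0:ℝ) T, ∀ x ∈ Set.Icc (-1:ℝ) 1, 0 < u t x) →
      ∀ t ∈ Set.Icc (0:ℝ) T, pnorm 1 (deriv (u t)) ≤ C₁₀ := by
  -- bounds on the initial datum
  obtain ⟨C1, hC1⟩ := isCompact_Icc.exists_bound_of_continuousOn
    (s := Icc (-1:ℝ) 1) (hu₀.continuous.continuousOn)
  obtain ⟨C2, hC2⟩ := isCompact_Icc.exists_bound_of_continuousOn
    (s := Icc (-1:ℝ) 1) ((deriv_smooth_of_smooth (hu₀.of_le (by simp))).continuous.continuousOn)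
  set C₀ : ℝ := max C1 (max C2 1) with hC₀
  have hC₀1 : (1:ℝ) ≤ C₀ := le_max_of_le_right (le_max_right _ _)
  have hC₀u : ∀ x ∈ Icc (-1:ℝ) 1, u₀ x ≤ C₀ := fun x hx =>
    le_trans (le_trans (le_abs_self _) (hC1 x hx)) (le_max_left _ _)
  have hC₀u' : ∀ x ∈ Icc (-1:ℝ) 1, |deriv u₀ x| ≤ C₀ := fun x hx =>
    le_trans (hC2 x hx) (le_max_of_le_right (le_max_left _ _))
  -- global constants
  set M : ℝ := C₀ * Real.exp ((r+1) * T) with hMdef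
  have hM1 : (1:ℝ) ≤ M := by
    have h1 : (1:ℝ) ≤ Real.exp ((r+1) * T) := Real.one_le_exp (by positivity)
    calc (1:ℝ) = 1 * 1 := by norm_num
      _ ≤ C₀ * Real.exp ((r+1) * T) := mul_le_mul hC₀1 h1 (by norm_num) (by linarith)
  have hMpos : (0:ℝ) < M := lt_of_lt_of_le one_pos hM1
  set Kc : ℝ := 4*M/ε + r*(1+2*M) + 1 with hKc
  set Lc : ℝ := 4*M^2/ε^2 with hLc
  have hKpos : 0 < Kc := by
    have h1 : 0 < 4*M/ε := by positivity
    have h2 : 0 ≤ r*(1+2*M) := by positivity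
    rw [hKc]; linarith
  have hLpos : 0 ≤ Lc := by positivity
  refine ⟨(2*(C₀+1) + Lc/Kc) * Real.exp (Kc*T) + 1, ?_, ?_⟩
  · have h1 : 0 ≤ Lc/Kc := div_nonneg hLpos hKpos.le
    have h2 : 0 ≤ (2*(C₀+1) + Lc/Kc) * Real.exp (Kc*T) := by
      apply mul_nonneg _ (Real.exp_pos _).le
      linarith
    linarith
  intro δ hδ u φ sol hpos t ht
  -- L∞ bound from the maximum principle
  have hMP := max_principle sol hT hε hr hδ.1.le hpos hC₀u
  have hMb : ∀ s ∈ Icc (0:ℝ) T, ∀ x ∈ Icc (-1:ℝ) 1, u s x ≤ M := by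
    intro s hs x hx
    refine le_trans (hMP s hs x hx) ?_
    rw [hMdef]
    apply mul_le_mul_of_nonneg_left _ (by linarith : (0:ℝ) ≤ C₀)
    exact Real.exp_le_exp.mpr (mul_le_mul_of_nonneg_left hs.2 (by linarith))
  -- BV bound
  have hbv := bv_main sol hT hε hr hδ.1 hM1 hMb t ht
  -- initial BV
  have hW0eq : (∫ x in (-1:ℝ)..1, bet (deriv (u 0) x))
      = ∫ x in (-1:ℝ)..1, bet (deriv u₀ x) := by
    apply intervalIntegral.integral_congr_ae
    have hone : ∀ᵐ (x:ℝ), x ≠ 1 := by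
      rw [MeasureTheory.ae_iff]
      have hset : {x : ℝ | ¬ x ≠ 1} = {1} := by ext z; simp
      rw [hset]
      exact measure_singleton 1
    filter_upwards [hone] with x hx1 hxI
    rw [uIoc_of_le (by norm_num : (-1:ℝ) ≤ 1)] at hxI
    have hxIoo : x ∈ Ioo (-1:ℝ) 1 := ⟨hxI.1, lt_of_le_of_ne hxI.2 hx1⟩
    have hder : deriv (u 0) x = deriv u₀ x := by
      apply Filter.EventuallyEq.deriv_eq
      filter_upwards [Icc_mem_nhds hxIoo.1 hxIoo.2] with z hz
      exact sol.init z hz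
    rw [hder]
  have hW0b : (∫ x in (-1:ℝ)..1, bet (deriv u₀ x)) ≤ 2*(C₀+1) := by
    have hmono : (∫ x in (-1:ℝ)..1, bet (deriv u₀ x)) ≤ ∫ x in (-1:ℝ)..1, (C₀+1) := by
      apply intervalIntegral.integral_mono_on (by norm_num)
      · exact ((continuous_bet.comp
          (deriv_smooth_of_smooth (hu₀.of_le (by simp))).continuous).intervalIntegrable _ _)
      · exact intervalIntegrable_const
      · intro x hx
        calc bet (deriv u₀ x) ≤ |deriv u₀ x| + 1 := bet_le _
          _ ≤ C₀ + 1 := by linarith [hC₀u' x hx]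
    refine le_trans hmono ?_
    rw [intervalIntegral.integral_const]
    simp only [smul_eq_mul]
    norm_num
  -- assemble
  have hfinal : (∫ x in (-1:ℝ)..1, bet (deriv (u t) x))
      ≤ (2*(C₀+1) + Lc/Kc) * Real.exp (Kc*T) := by
    refine le_trans hbv ?_
    apply mul_le_mul_of_nonneg_right _ (Real.exp_pos _).le
    rw [hW0eq] at *
    linarith [hW0b]
  have hpn : pnorm 1 (deriv (u t)) = ∫ x in (-1:ℝ)..1, |deriv (u t) x| := by
    simp [pnorm, Real.rpow_one]
  rw [hpn]
  have habs : (∫ x in (-1:ℝ)..1, |deriv (u t) x|) ≤ ∫ x in (-1:ℝ)..1, bet (deriv (u t) x) := by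
    apply intervalIntegral.integral_mono_on (by norm_num)
    · exact (((deriv_smooth_of_smooth (slice_smooth sol.smooth_u t)).continuous).abs.intervalIntegrable _ _)
    · exact ((continuous_bet.comp
        (deriv_smooth_of_smooth (slice_smooth sol.smooth_u t)).continuous).intervalIntegrable _ _)
    · intro x _
      exact abs_le_bet _
  linarith
end

section
/- There exists a constant C₁₁ > 0, depending only on T, ε, r and u₀ (but not on δ), such that for every δ∈(0,1) and every classical solution (u,φ) of the monostable system with diffusion δ satisfying in addition u(t,x) > 0 for all (t,x)∈[0,T]×[-1,1], one has ‖∂ₓφ(t,·)‖_∞ + ‖u(t,·)‖_∞ ≤ C₁₁ for all t∈[0,T]. -/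
open Set MeasureTheory Filter Topology

/-- If `f` has a minimum over `Icc a b` at `x₀`, with `deriv f x₀ = 0` and
`deriv (deriv f) x₀ < 0`, we get a contradiction. -/
lemma no_neg_second_at_min {f : ℝ → ℝ} {a b x₀ : ℝ}
    (hf : Differentiable ℝ f) (hf' : Differentiable ℝ (deriv f))
    (hab : a < b) (hx₀ : x₀ ∈ Set.Icc a b)
    (hmin : ∀ x ∈ Set.Icc a b, f x₀ ≤ f x)
    (hd : deriv f x₀ = 0) (hneg : deriv (deriv f) x₀ < 0) : False := by
  have hslope : Tendsto (slope (deriv f) x₀) (𝓝[≠] x₀) (𝓝 (deriv (deriv f) x₀)) :=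
    hasDerivAt_iff_tendsto_slope.1 (hf' x₀).hasDerivAt
  have hev : ∀ᶠ y in 𝓝[≠] x₀, slope (deriv f) x₀ y < 0 :=
    hslope.eventually_lt_const hneg
  rw [eventually_nhdsWithin_iff] at hev
  obtain ⟨d, hd0, hball⟩ := Metric.eventually_nhds_iff.mp hev
  -- hball : ∀ y, dist y x₀ < d → y ≠ x₀ → slope (deriv f) x₀ y < 0
  have key : ∀ y, dist y x₀ < d → y ≠ x₀ → deriv f y / (y - x₀) < 0 := by
    intro y h1 h2
    have := hball h1 h2
    rwa [slope_def_field, hd, sub_zero] at this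
  rcases lt_or_eq_of_le hx₀.2 with hlt | heq
  · -- x₀ < b : use right side
    set x₁ := min b (x₀ + d / 2) with hx₁def
    have hx₀x₁ : x₀ < x₁ := lt_min hlt (by linarith)
    have hx₁b : x₁ ≤ b := min_le_left _ _
    have hx₁mem : x₁ ∈ Set.Icc a b := ⟨le_trans hx₀.1 hx₀x₁.le, hx₁b⟩
    obtain ⟨c, hc, hceq⟩ := exists_deriv_eq_slope f hx₀x₁
      (hf.continuous.continuousOn) (hf.differentiableOn)
    have hcd : dist c x₀ < d := by
      rw [Real.dist_eq, abs_of_pos (sub_pos.2 hc.1)]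
      have : x₁ ≤ x₀ + d / 2 := min_le_right _ _
      have := hc.2
      linarith
    have hder : deriv f c < 0 := by
      have hq := key c hcd (ne_of_gt hc.1)
      by_contra hge
      push_neg at hge
      have : 0 ≤ deriv f c / (c - x₀) := div_nonneg hge (by linarith [hc.1])
      linarith
    have heq2 : deriv f c * (x₁ - x₀) = f x₁ - f x₀ :=
      (eq_div_iff (by linarith : x₁ - x₀ ≠ 0)).mp hceq
    have hlt' : f x₁ < f x₀ := by nlinarith [hx₀x₁]
    exact absurd (hmin x₁ hx₁mem) (not_le.2 hlt')
  · -- x₀ = b, so a < x₀ : use left side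
    have hax₀ : a < x₀ := heq ▸ hab
    set x₁ := max a (x₀ - d / 2) with hx₁def
    have hx₁x₀ : x₁ < x₀ := max_lt hax₀ (by linarith)
    have hx₁mem : x₁ ∈ Set.Icc a b := ⟨le_max_left _ _, le_trans hx₁x₀.le hx₀.2⟩
    obtain ⟨c, hc, hceq⟩ := exists_deriv_eq_slope f hx₁x₀
      (hf.continuous.continuousOn) (hf.differentiableOn)
    have hcd : dist c x₀ < d := by
      rw [Real.dist_eq, abs_of_neg (sub_neg.2 hc.2)]
      have : x₀ - d / 2 ≤ x₁ := le_max_right _ _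
      have := hc.1
      linarith
    have hder : 0 < deriv f c := by
      have hq := key c hcd (ne_of_lt hc.2)
      by_contra hge
      push_neg at hge
      have : 0 ≤ deriv f c / (c - x₀) := div_nonneg_iff.mpr (Or.inr ⟨hge, by linarith [hc.2]⟩)
      linarith
    have heq2 : deriv f c * (x₀ - x₁) = f x₀ - f x₁ :=
      (eq_div_iff (by linarith : x₀ - x₁ ≠ 0)).mp hceq
    have hlt' : f x₁ < f x₀ := by nlinarith [hx₁x₀]
    exact absurd (hmin x₁ hx₁mem) (not_le.2 hlt')

lemma second_deriv_nonpos_at_max_s16 {f : ℝ → ℝ} {a b x₀ : ℝ}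
    (hf : Differentiable ℝ f) (hf' : Differentiable ℝ (deriv f))
    (hab : a < b) (hx₀ : x₀ ∈ Set.Icc a b)
    (hmax : ∀ x ∈ Set.Icc a b, f x ≤ f x₀)
    (hd : deriv f x₀ = 0) : deriv (deriv f) x₀ ≤ 0 := by
  by_contra hpos
  push_neg at hpos
  have hnegderiv : deriv (fun y => -f y) = fun y => -deriv f y := funext fun y => deriv.neg
  refine no_neg_second_at_min (f := fun y => -f y) hf.neg ?_ hab hx₀
    (fun x hx => neg_le_neg (hmax x hx)) ?_ ?_
  · rw [hnegderiv]; exact hf'.neg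
  · rw [hnegderiv]; simp [hd]
  · rw [hnegderiv]
    have : deriv (fun y => -deriv f y) x₀ = -deriv (deriv f) x₀ := deriv.neg
    rw [this]; linarith

lemma eqOn_deriv_of_eqOn {f g : ℝ → ℝ} {a b : ℝ} (hab : a < b)
    (hfc : Continuous (deriv f)) (hgc : Continuous (deriv g))
    (h : Set.EqOn f g (Set.Icc a b)) : Set.EqOn (deriv f) (deriv g) (Set.Icc a b) := by
  have hIoo : Set.EqOn (deriv f) (deriv g) (Set.Ioo a b) := fun x hx =>
    Filter.EventuallyEq.deriv_eq <| Filter.eventuallyEq_of_mem (Ioo_mem_nhds hx.1 hx.2)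
      (fun y hy => h (Ioo_subset_Icc_self hy))
  have := hIoo.closure hfc hgc
  rwa [closure_Ioo hab.ne] at this

/-- Elliptic maximum-principle bound: if `ε φ'' = φ + u'` on `[-1,1]` with `φ(±1)=0`
and `u ≤ M` on `[-1,1]`, then `u - M ≤ ε φ'` on `[-1,1]`. -/
lemma elliptic_lower {ε M : ℝ} (hε : 0 < ε) {φ u : ℝ → ℝ}
    (hφ : ContDiff ℝ (⊤:ℕ∞) φ) (hu : ContDiff ℝ (⊤:ℕ∞) u)
    (heq : ∀ x ∈ Set.Icc (-1:ℝ) 1, ε * deriv (deriv φ) x = φ x + deriv u x)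
    (hbc1 : φ (-1) = 0) (hbc2 : φ 1 = 0)
    (hM : ∀ x ∈ Set.Icc (-1:ℝ) 1, u x ≤ M) :
    ∀ x ∈ Set.Icc (-1:ℝ) 1, u x - M ≤ ε * deriv φ x := by
  have hφ' : ContDiff ℝ (⊤:ℕ∞) (deriv φ) := (contDiff_infty_iff_deriv.mp hφ).2
  set χ : ℝ → ℝ := fun x => ε * deriv φ x + (M - u x) with hχdef
  have hχ : ContDiff ℝ (⊤:ℕ∞) χ := (contDiff_const.mul hφ').add (contDiff_const.sub hu)
  have hχd : Differentiable ℝ χ := hχ.differentiable (by simp)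
  have hχ' : ContDiff ℝ (⊤:ℕ∞) (deriv χ) := (contDiff_infty_iff_deriv.mp hχ).2
  have hderivχ : ∀ x, deriv χ x = ε * deriv (deriv φ) x - deriv u x := by
    intro x
    have h1 : HasDerivAt χ (ε * deriv (deriv φ) x + (0 - deriv u x)) x :=
      (((hφ'.differentiable (by simp)) x).hasDerivAt.const_mul ε).add
        ((hasDerivAt_const x M).sub ((hu.differentiable (by simp)) x).hasDerivAt)
    rw [h1.deriv]; ring
  have hχeqφ : Set.EqOn (deriv χ) φ (Set.Icc (-1:ℝ) 1) := by
    intro x hx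
    rw [hderivχ x, heq x hx]; ring
  -- minimum of χ on Icc
  obtain ⟨x₀, hx₀I, hmin₀⟩ := isCompact_Icc.exists_isMinOn (α := ℝ)
    (⟨0, by norm_num⟩ : (Set.Icc (-1:ℝ) 1).Nonempty) (hχ.continuous.continuousOn)
  have hmin : ∀ x ∈ Set.Icc (-1:ℝ) 1, χ x₀ ≤ χ x := fun x hx => hmin₀ hx
  have hkey : 0 ≤ χ x₀ := by
    by_contra hχ0
    push_neg at hχ0
    -- deriv χ x₀ = 0
    have hd0 : deriv χ x₀ = 0 := by
      by_cases hio : x₀ ∈ Set.Ioo (-1:ℝ) 1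
      · exact (hmin₀.isLocalMin (Icc_mem_nhds hio.1 hio.2)).deriv_eq_zero
      · have : x₀ = -1 ∨ x₀ = 1 := by
          rcases hx₀I with ⟨h1, h2⟩
          rcases eq_or_lt_of_le h1 with he | hl
          · exact Or.inl he.symm
          · rcases eq_or_lt_of_le h2 with he | hl2
            · exact Or.inr he
            · exact absurd ⟨hl, hl2⟩ hio
        rcases this with he | he <;> rw [hχeqφ hx₀I, he] <;> assumption
    -- second derivative of χ at x₀ equals deriv φ x₀ < 0
    have hdd : deriv (deriv χ) x₀ = deriv φ x₀ :=
      eqOn_deriv_of_eqOn (by norm_num) ((contDiff_infty_iff_deriv.mp hχ').2.continuous) hφ'.continuous hχeqφ hx₀I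
    have hφ'val : deriv φ x₀ = (χ x₀ - (M - u x₀)) / ε := by
      have : χ x₀ = ε * deriv φ x₀ + (M - u x₀) := rfl
      field_simp [this]
      linarith
    have hddneg : deriv (deriv χ) x₀ < 0 := by
      rw [hdd, hφ'val]
      apply div_neg_of_neg_of_pos _ hε
      have := hM x₀ hx₀I
      linarith
    exact no_neg_second_at_min hχd (hχ'.differentiable (by simp)) (by norm_num) hx₀I hmin hd0 hddneg
  intro x hx
  have := le_trans hkey (hmin x hx)
  simp only [hχdef] at this
  linarith

/-- Upper bound: under the same hypotheses plus `0 ≤ u`, `ε φ' ≤ u` on `[-1,1]`. -/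
lemma elliptic_upper {ε : ℝ} (hε : 0 < ε) {φ u : ℝ → ℝ}
    (hφ : ContDiff ℝ (⊤:ℕ∞) φ) (hu : ContDiff ℝ (⊤:ℕ∞) u)
    (heq : ∀ x ∈ Set.Icc (-1:ℝ) 1, ε * deriv (deriv φ) x = φ x + deriv u x)
    (hbc1 : φ (-1) = 0) (hbc2 : φ 1 = 0)
    (hpos : ∀ x ∈ Set.Icc (-1:ℝ) 1, 0 ≤ u x) :
    ∀ x ∈ Set.Icc (-1:ℝ) 1, ε * deriv φ x ≤ u x := by
  have hnegφ : ContDiff ℝ (⊤:ℕ∞) (fun x => -φ x) := hφ.neg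
  have hnegu : ContDiff ℝ (⊤:ℕ∞) (fun x => -u x) := hu.neg
  have hdφ : deriv (fun x => -φ x) = fun x => -deriv φ x := funext fun x => deriv.neg
  have hdu : deriv (fun x => -u x) = fun x => -deriv u x := funext fun x => deriv.neg
  have heq' : ∀ x ∈ Set.Icc (-1:ℝ) 1,
      ε * deriv (deriv (fun x => -φ x)) x = (fun x => -φ x) x + deriv (fun x => -u x) x := by
    intro x hx
    rw [hdφ, hdu]
    have : deriv (fun x => -deriv φ x) x = -deriv (deriv φ) x := deriv.neg
    rw [this]
    have := heq x hx
    simp only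
    linarith
  have := elliptic_lower (M := 0) hε hnegφ hnegu heq' (by simp [hbc1]) (by simp [hbc2])
    (fun x hx => by simpa using hpos x hx)
  intro x hx
  have h2 := this x hx
  rw [hdφ] at h2
  simp only at h2
  linarith

/-- Parabolic maximum principle: any classical solution satisfies the uniform bound
`u t x < (supnorm u₀ + 2) * exp t` on `[0,T] × [-1,1]`. -/
lemma parabolic_bound {T ε r δ : ℝ} {u₀ : ℝ → ℝ} {u φ : ℝ → ℝ → ℝ}
    (hT : 0 < T) (hε : 0 < ε) (hr : 0 ≤ r) (hδ : 0 < δ)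
    (hu₀ : ContDiff ℝ (⊤ : ℕ∞) u₀)
    (sol : IsMonostableSol T ε r δ u₀ u φ) :
    ∀ t ∈ Set.Icc (0:ℝ) T, ∀ x ∈ Set.Icc (-1:ℝ) 1,
      u t x < (supnorm u₀ + 2) * Real.exp t := by
  have hslice_x : ∀ t, ContDiff ℝ (⊤:ℕ∞) (fun x => u t x) := fun t =>
    (sol.smooth_u.of_le (by simp)).comp (contDiff_const.prodMk contDiff_id)
  have hslice_t : ∀ x, ContDiff ℝ (⊤:ℕ∞) (fun s => u s x) := fun x =>
    (sol.smooth_u.of_le (by simp)).comp (contDiff_id.prodMk contDiff_const)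
  have hslice_φ : ∀ t, ContDiff ℝ (⊤:ℕ∞) (fun x => φ t x) := fun t =>
    (sol.smooth_phi.of_le (by simp)).comp (contDiff_const.prodMk contDiff_id)
  have hbdd : BddAbove ((fun x => |u₀ x|) '' Set.Icc (-1:ℝ) 1) :=
    (isCompact_Icc.image hu₀.continuous.abs).bddAbove
  have hsup_ge : ∀ x ∈ Set.Icc (-1:ℝ) 1, u₀ x ≤ supnorm u₀ := fun x hx =>
    (le_abs_self _).trans (le_csSup hbdd ⟨x, hx, rfl⟩)
  have hsup0 : 0 ≤ supnorm u₀ :=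
    le_trans (abs_nonneg (u₀ 0)) (le_csSup hbdd ⟨0, by norm_num, rfl⟩)
  set A : ℝ := supnorm u₀ + 2 with hAdef
  have hA2 : 2 ≤ A := by simp only [hAdef]; linarith
  by_contra hcon
  push_neg at hcon
  obtain ⟨t₁, ht₁, x₁, hx₁, hge1⟩ := hcon
  -- the "touching" set
  set C : Set (ℝ × ℝ) := (Set.Icc (0:ℝ) T ×ˢ Set.Icc (-1:ℝ) 1) ∩
    {q : ℝ × ℝ | A * Real.exp q.1 ≤ u q.1 q.2} with hCdef
  have hCcomp : IsCompact C := (isCompact_Icc.prod isCompact_Icc).inter_right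
    (isClosed_le (continuous_const.mul (Real.continuous_exp.comp continuous_fst))
      sol.smooth_u.continuous)
  set S : Set ℝ := Prod.fst '' C with hSdef
  have hScomp : IsCompact S := hCcomp.image continuous_fst
  have hSne : S.Nonempty := ⟨t₁, ⟨(t₁, x₁), ⟨Set.mem_prod.mpr ⟨ht₁, hx₁⟩, hge1⟩, rfl⟩⟩
  obtain ⟨⟨t₀, x₀⟩, hqC, ht₀eq⟩ := hScomp.sInf_mem hSne
  obtain ⟨hqmem, hqle⟩ := hqC
  obtain ⟨hq1, hq2⟩ := Set.mem_prod.mp hqmem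
  simp only at hq1 hq2 hqle
  have hqle2 : A * Real.exp t₀ ≤ u t₀ x₀ := hqle
  have hq1' : t₀ ∈ Set.Icc (0:ℝ) T := hq1
  have ht₀eq' : t₀ = sInf S := ht₀eq
  have ht₀lb : ∀ s ∈ S, t₀ ≤ s := by
    intro s hs
    rw [ht₀eq']
    exact csInf_le hScomp.bddBelow hs
  have hexp1 : ∀ s : ℝ, 0 ≤ s → 1 ≤ Real.exp s := by
    intro s hs
    have := Real.add_one_le_exp s
    linarith
  have ht₀pos : 0 < t₀ := by
    rcases lt_or_eq_of_le hq1.1 with h | h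
    · exact h
    · exfalso
      rw [← h] at hqle2
      have h1 : u 0 x₀ = u₀ x₀ := sol.init x₀ hq2
      have h2 := hsup_ge x₀ hq2
      rw [Real.exp_zero, mul_one, h1] at hqle2
      simp only [hAdef] at hqle2
      linarith
  have hnot : ∀ s, 0 ≤ s → s < t₀ → ∀ x ∈ Set.Icc (-1:ℝ) 1,
      u s x < A * Real.exp s := by
    intro s hs0 hst x hx
    by_contra hge'
    push_neg at hge'
    have hsmem : s ∈ S := ⟨(s, x),
      ⟨Set.mem_prod.mpr ⟨⟨hs0, le_trans hst.le hq1.2⟩, hx⟩, hge'⟩, rfl⟩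
    exact absurd (ht₀lb s hsmem) (not_le.2 hst)
  have hle : ∀ x ∈ Set.Icc (-1:ℝ) 1, u t₀ x ≤ A * Real.exp t₀ := by
    intro x hx
    have hcont : ContinuousAt (fun s => A * Real.exp s - u s x) t₀ :=
      ((continuous_const.mul Real.continuous_exp).sub
        (hslice_t x).continuous).continuousAt
    have htend : Tendsto (fun s => A * Real.exp s - u s x) (𝓝[<] t₀)
        (𝓝 (A * Real.exp t₀ - u t₀ x)) := hcont.tendsto.mono_left nhdsWithin_le_nhds
    have hev : ∀ᶠ s in 𝓝[<] t₀, 0 ≤ A * Real.exp s - u s x := by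
      filter_upwards [Ioo_mem_nhdsLT_of_mem (⟨ht₀pos, le_refl t₀⟩ : t₀ ∈ Set.Ioc 0 t₀)]
        with s hs
      have := hnot s hs.1.le hs.2 x hx
      linarith
    have := ge_of_tendsto htend hev
    linarith
  have hueq : u t₀ x₀ = A * Real.exp t₀ := le_antisymm (hle x₀ hq2) hqle2
  have hmax' : ∀ x ∈ Set.Icc (-1:ℝ) 1, u t₀ x ≤ u t₀ x₀ := by
    intro x hx
    rw [hueq]
    exact hle x hx
  -- time derivative at (t₀, x₀) is ≥ A * exp t₀
  have hderiv_t : A * Real.exp t₀ ≤ deriv (fun s => u s x₀) t₀ := by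
    have h1 : HasDerivAt (fun s => u s x₀) (deriv (fun s => u s x₀) t₀) t₀ :=
      (((hslice_t x₀).differentiable (by simp)) t₀).hasDerivAt
    have h2 : HasDerivAt (fun s => A * Real.exp s) (A * Real.exp t₀) t₀ :=
      (Real.hasDerivAt_exp t₀).const_mul A
    have hg : HasDerivAt (fun s => u s x₀ - A * Real.exp s)
        (deriv (fun s => u s x₀) t₀ - A * Real.exp t₀) t₀ := h1.sub h2
    have htend := (hasDerivAt_iff_tendsto_slope.1 hg).mono_left
      (nhdsWithin_mono t₀ (fun y (hy : y ∈ Set.Iio t₀) => ne_of_lt hy))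
    have hev : ∀ᶠ s in 𝓝[<] t₀, 0 ≤ slope (fun s => u s x₀ - A * Real.exp s) t₀ s := by
      filter_upwards [Ioo_mem_nhdsLT_of_mem (⟨ht₀pos, le_refl t₀⟩ : t₀ ∈ Set.Ioc 0 t₀)]
        with s hs
      rw [slope_def_field]
      have hval : u s x₀ - A * Real.exp s < 0 := by
        have := hnot s hs.1.le hs.2 x₀ hq2
        linarith
      have h0 : u t₀ x₀ - A * Real.exp t₀ = 0 := by rw [hueq]; ring
      apply div_nonneg_iff.mpr
      exact Or.inr ⟨by linarith, by linarith [hs.2]⟩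
    have := ge_of_tendsto htend hev
    linarith
  -- spatial first derivative vanishes at x₀
  have hux : deriv (u t₀) x₀ = 0 := by
    by_cases hio : x₀ ∈ Set.Ioo (-1:ℝ) 1
    · have hmaxon : IsMaxOn (u t₀) (Set.Icc (-1:ℝ) 1) x₀ := fun x hx => hmax' x hx
      exact (hmaxon.isLocalMax (Icc_mem_nhds hio.1 hio.2)).deriv_eq_zero
    · have : x₀ = -1 ∨ x₀ = 1 := by
        rcases hq2 with ⟨h1, h2⟩
        rcases eq_or_lt_of_le h1 with he | hl
        · exact Or.inl he.symm
        · rcases eq_or_lt_of_le h2 with he | hl2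
          · exact Or.inr he
          · exact absurd ⟨hl, hl2⟩ hio
      rcases this with he | he <;> rw [he]
      · exact (sol.bc_u t₀ hq1').1
      · exact (sol.bc_u t₀ hq1').2
  -- second spatial derivative nonpositive
  have huxx : deriv (deriv (u t₀)) x₀ ≤ 0 :=
    second_deriv_nonpos_at_max_s16 ((hslice_x t₀).differentiable (by simp))
      ((contDiff_infty_iff_deriv.mp (hslice_x t₀)).2.differentiable (by simp))
      (by norm_num) hq2 hmax' hux
  -- φ' nonnegative at x₀
  have heqφ : ∀ x ∈ Set.Icc (-1:ℝ) 1,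
      ε * deriv (deriv (φ t₀)) x = φ t₀ x + deriv (u t₀) x := by
    intro x hx
    have := sol.eq_phi t₀ hq1' x hx
    linarith
  have hφ'pos : 0 ≤ deriv (φ t₀) x₀ := by
    have := elliptic_lower (M := u t₀ x₀) hε (hslice_φ t₀) (hslice_x t₀) heqφ
      (sol.bc_phi t₀ hq1').1 (sol.bc_phi t₀ hq1').2 hmax' x₀ hq2
    have h0 : (0:ℝ) ≤ ε * deriv (φ t₀) x₀ := by linarith
    exact (mul_nonneg_iff_of_pos_left hε).mp h0
  -- product rule
  have hprod : deriv (fun y => u t₀ y * φ t₀ y) x₀ = u t₀ x₀ * deriv (φ t₀) x₀ := by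
    have := deriv_fun_mul (((hslice_x t₀).differentiable (by simp)) x₀)
      (((hslice_φ t₀).differentiable (by simp)) x₀)
    rw [this, hux]
    ring
  -- plug into the equation
  have heq_u := sol.eq_u t₀ hq1' x₀ hq2
  rw [hprod] at heq_u
  have hupos : (2:ℝ) ≤ u t₀ x₀ := by
    rw [hueq]
    nlinarith [hexp1 t₀ ht₀pos.le, Real.exp_pos t₀]
  have h1 : δ * deriv (deriv (u t₀)) x₀ ≤ 0 :=
    mul_nonpos_of_nonneg_of_nonpos hδ.le huxx
  have h2 : 0 ≤ u t₀ x₀ * deriv (φ t₀) x₀ := mul_nonneg (by linarith) hφ'pos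
  have h3 : r * u t₀ x₀ * (1 - u t₀ x₀) ≤ 0 :=
    mul_nonpos_of_nonneg_of_nonpos (mul_nonneg hr (by linarith)) (by linarith)
  have hApos : 0 < A * Real.exp t₀ := by positivity
  linarith


theorem uniform_bounds_monostable (T ε r : ℝ) (u₀ : ℝ → ℝ)
    (hT : 0 < T) (hε : 0 < ε) (hr : 0 ≤ r)
    (hu₀ : ContDiff ℝ (⊤ : ℕ∞) u₀) (hu₀nonneg : ∀ x ∈ Set.Icc (-1:ℝ) 1, 0 ≤ u₀ x) :
    ∃ C₁₁ > (0:ℝ), ∀ δ ∈ Set.Ioo (0:ℝ) 1, ∀ u φ : ℝ → ℝ → ℝ, IsMonostableSol T ε r δ u₀ u φ →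
      (∀ t ∈ Set.Icc (0:ℝ) T, ∀ x ∈ Set.Icc (-1:ℝ) 1, 0 < u t x) →
      ∀ t ∈ Set.Icc (0:ℝ) T, supnorm (deriv (φ t)) + supnorm (u t) ≤ C₁₁ := by
  have hbdd : BddAbove ((fun x => |u₀ x|) '' Set.Icc (-1:ℝ) 1) :=
    (isCompact_Icc.image hu₀.continuous.abs).bddAbove
  have hsup0 : 0 ≤ supnorm u₀ :=
    le_trans (abs_nonneg (u₀ 0)) (le_csSup hbdd ⟨0, by norm_num, rfl⟩)
  set B : ℝ := (supnorm u₀ + 2) * Real.exp T with hBdef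
  have hBpos : 0 < B := by
    have := Real.exp_pos T
    nlinarith
  refine ⟨B / ε + B, by positivity, ?_⟩
  intro δ hδ u φ sol hpos t ht
  have hslice_x : ∀ t, ContDiff ℝ (⊤:ℕ∞) (fun x => u t x) := fun t =>
    (sol.smooth_u.of_le (by simp)).comp (contDiff_const.prodMk contDiff_id)
  have hslice_φ : ∀ t, ContDiff ℝ (⊤:ℕ∞) (fun x => φ t x) := fun t =>
    (sol.smooth_phi.of_le (by simp)).comp (contDiff_const.prodMk contDiff_id)
  have hpar := parabolic_bound hT hε hr hδ.1 hu₀ sol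
  have hub : ∀ x ∈ Set.Icc (-1:ℝ) 1, u t x ≤ B := by
    intro x hx
    have h1 := (hpar t ht x hx).le
    have h2 : Real.exp t ≤ Real.exp T := Real.exp_le_exp.mpr ht.2
    have h3 : 0 ≤ supnorm u₀ + 2 := by linarith
    calc u t x ≤ (supnorm u₀ + 2) * Real.exp t := h1
      _ ≤ (supnorm u₀ + 2) * Real.exp T := mul_le_mul_of_nonneg_left h2 h3
  have heqφ : ∀ x ∈ Set.Icc (-1:ℝ) 1,
      ε * deriv (deriv (φ t)) x = φ t x + deriv (u t) x := by
    intro x hx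
    have := sol.eq_phi t ht x hx
    linarith
  have hlow := elliptic_lower (M := B) hε (hslice_φ t) (hslice_x t) heqφ
    (sol.bc_phi t ht).1 (sol.bc_phi t ht).2 hub
  have hupp := elliptic_upper hε (hslice_φ t) (hslice_x t) heqφ
    (sol.bc_phi t ht).1 (sol.bc_phi t ht).2 (sol.nonneg t ht)
  have habs : ∀ x ∈ Set.Icc (-1:ℝ) 1, |deriv (φ t) x| ≤ B / ε := by
    intro x hx
    have h1 := hlow x hx
    have h2 := hupp x hx
    have h3 := sol.nonneg t ht x hx
    have h4 := hub x hx
    have hBe : B / ε * ε = B := div_mul_cancel₀ B (ne_of_gt hε)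
    rw [abs_le]
    constructor
    · nlinarith
    · nlinarith
  have hs1 : supnorm (deriv (φ t)) ≤ B / ε := by
    apply Real.sSup_le _ (by positivity)
    rintro y ⟨x, hx, rfl⟩
    exact habs x hx
  have hs2 : supnorm (u t) ≤ B := by
    apply Real.sSup_le _ hBpos.le
    rintro y ⟨x, hx, rfl⟩
    show |u t x| ≤ B
    rw [abs_of_nonneg (sol.nonneg t ht x hx)]
    exact hub x hx
  linarith
end
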